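/- arXiv:2001.08064 — 3 statements merged into one kernel-verified Lean document; each statement's English description precedes it below -/
import Mathlib

section
/- Let N1 and N2 be state machine decomposable, safe marked Petri nets related by an α-morphism φ : N1 → N2. If N1 is a GWF-net with initial marking m0^1 and final marking mf^1, then N2 is a GWF-net with initial marking m0^2=φ(m0^1) and final marking mf^2=φ(mf^1); in particular, every place of m0^2 has empty preset, every place of φ(mf^1) has empty postset, and every node of N2 lies on a directed path from some place of m0^2 to some place of φ(mf^1). -/
open Classical

namespace PNets

/-- A (marked) Petri net: places, transitions, flow relation, initial and final markings
(markings of safe nets are treated as subsets of places). -/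
structure Net (X : Type) where
  P : Set X
  T : Set X
  F : Set (X × X)
  m0 : Set X
  mf : Set X

variable {X Y Z W C S : Type}

def pre (N : Net X) (x : X) : Set X := {y | (y, x) ∈ N.F}

def post (N : Net X) (x : X) : Set X := {y | (x, y) ∈ N.F}

def nodes (N : Net X) : Set X := N.P ∪ N.T

/-- Standing assumptions on Petri nets. -/
structure IsNet (N : Net X) : Prop where
  disj : Disjoint N.P N.T
  flow_sub : N.F ⊆ (N.P ×ˢ N.T) ∪ (N.T ×ˢ N.P)
  no_isolated : ∀ x ∈ nodes N, (pre N x).Nonempty ∨ (post N x).Nonempty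
  t_pre : ∀ t ∈ N.T, (pre N t).Nonempty
  t_post : ∀ t ∈ N.T, (post N t).Nonempty
  no_selfloop : ∀ x y, (x, y) ∈ N.F → (y, x) ∉ N.F

/-! ### Set (safe) semantics -/

def enabled (N : Net X) (m : Set X) (t : X) : Prop := t ∈ N.T ∧ pre N t ⊆ m

def fires (N : Net X) (m : Set X) (t : X) (m' : Set X) : Prop :=
  enabled N m t ∧ m' = (m \ pre N t) ∪ post N t

def step (N : Net X) (m m' : Set X) : Prop := ∃ t, fires N m t m'

def reachable (N : Net X) (m : Set X) : Set (Set X) :=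
  {m' | Relation.ReflTransGen (step N) m m'}

def seqFires (N : Net X) : Set X → List X → Set X → Prop
  | m, [], m' => m' = m
  | m, t :: w, m' => ∃ m1, fires N m t m1 ∧ seqFires N m1 w m'

/-! ### Multiset semantics (used for safety) -/

def firesM (N : Net X) (m : X → ℕ) (t : X) (m' : X → ℕ) : Prop :=
  t ∈ N.T ∧ (∀ p ∈ pre N t, 1 ≤ m p) ∧
    ∀ p, m' p = m p - (pre N t).indicator (fun _ => 1) p
                  + (post N t).indicator (fun _ => 1) p

def stepM (N : Net X) (m m' : X → ℕ) : Prop := ∃ t, firesM N m t m'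

def reachableM (N : Net X) (m : X → ℕ) : Set (X → ℕ) :=
  {m' | Relation.ReflTransGen (stepM N) m m'}

def seqFiresM (N : Net X) : (X → ℕ) → List X → (X → ℕ) → Prop
  | m, [], m' => m' = m
  | m, t :: w, m' => ∃ m1, firesM N m t m1 ∧ seqFiresM N m1 w m'

noncomputable def initM (N : Net X) : X → ℕ := N.m0.indicator fun _ => 1

/-- A marked net is safe if every reachable marking puts at most one token on each place. -/
def Safe (N : Net X) : Prop := ∀ m ∈ reachableM N (initM N), ∀ p, m p ≤ 1

/-! ### Generalized workflow nets and soundness -/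

def pathRel (N : Net X) : X → X → Prop :=
  fun x y => Relation.ReflTransGen (fun a b => (a, b) ∈ N.F) x y

structure IsGWF (N : Net X) : Prop where
  isNet : IsNet N
  m0_sub : N.m0 ⊆ N.P
  m0_ne : N.m0.Nonempty
  m0_nopre : ∀ p ∈ N.m0, pre N p = ∅
  mf_sub : N.mf ⊆ N.P
  mf_ne : N.mf.Nonempty
  mf_nopost : ∀ p ∈ N.mf, post N p = ∅
  connected : ∀ x ∈ nodes N, ∃ s ∈ N.m0, ∃ f ∈ N.mf, pathRel N s x ∧ pathRel N x f

structure Sound (N : Net X) : Prop where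
  proper : ∀ m ∈ reachable N N.m0, N.mf ∈ reachable N m
  clean : ∀ m ∈ reachable N N.m0, N.mf ⊆ m → m = N.mf
  live : ∀ t ∈ N.T, ∃ m ∈ reachable N N.m0, enabled N m t

/-! ### Subnets, state machines, sequential components -/

def subnet (N : Net X) (A : Set X) : Net X where
  P := N.P ∩ A
  T := N.T ∩ A
  F := N.F ∩ (A ×ˢ A)
  m0 := N.m0 ∩ A
  mf := N.mf ∩ A

def nbh (N : Net X) (A : Set X) : Set X := {x | ∃ a ∈ A, (x, a) ∈ N.F ∨ (a, x) ∈ N.F}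

def undirRel (N : Net X) (x y : X) : Prop := (x, y) ∈ N.F ∨ (y, x) ∈ N.F

def IsConnected (N : Net X) : Prop :=
  ∀ x ∈ nodes N, ∀ y ∈ nodes N, Relation.ReflTransGen (undirRel N) x y

def IsStateMachine (N : Net X) : Prop :=
  IsConnected N ∧ ∀ t ∈ N.T, (∃! p, p ∈ pre N t) ∧ (∃! p, p ∈ post N t)

/-- `A` (a set of places), together with its neighborhood transitions, generates a
sequential component of `N`. -/
def IsSeqComponent (N : Net X) (A : Set X) : Prop :=
  A ⊆ N.P ∧ IsStateMachine (subnet N (A ∪ nbh N A)) ∧ (∃! p, p ∈ N.m0 ∩ A)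

/-- State machine decomposability. -/
def SMD (N : Net X) : Prop := ∀ p ∈ N.P, ∃ A, IsSeqComponent N A ∧ p ∈ A

/-! ### Input/output elements of subnets, acyclicity -/

def inputs (N : Net X) (A : Set X) : Set X :=
  {y ∈ A | (∃ z, z ∉ A ∧ (z, y) ∈ N.F) ∨ pre N y = ∅}

def outputs (N : Net X) (A : Set X) : Set X :=
  {y ∈ A | (∃ z, z ∉ A ∧ (y, z) ∈ N.F) ∨ post N y = ∅}

/-- The inverse image of a node `p2` under `φ`, within the nodes of `N1`. -/
def invA (N1 : Net X) (φ : X → Y) (p2 : Y) : Set X := nodes N1 ∩ φ ⁻¹' {p2}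

def IsAcyclic (N : Net X) : Prop :=
  ∀ x, ¬ Relation.TransGen (fun a b => (a, b) ∈ N.F) x x

/-! ### α-morphisms -/

structure AlphaMorphism (N1 : Net X) (N2 : Net Y) (φ : X → Y) : Prop where
  maps : φ '' nodes N1 ⊆ nodes N2
  surj : nodes N2 ⊆ φ '' nodes N1
  places : φ '' N1.P = N2.P
  init : φ '' N1.m0 = N2.m0
  tt : ∀ t1 ∈ N1.T, φ t1 ∈ N2.T →
    φ '' pre N1 t1 = pre N2 (φ t1) ∧ φ '' post N1 t1 = post N2 (φ t1)
  tp : ∀ t1 ∈ N1.T, φ t1 ∈ N2.P → φ '' (pre N1 t1 ∪ post N1 t1) = {φ t1}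
  ref_acyclic : ∀ p2 ∈ N2.P, IsAcyclic (subnet N1 (invA N1 φ p2)) ∨ invA N1 φ p2 ⊆ N1.P
  ref_in : ∀ p2 ∈ N2.P, ∀ p1 ∈ N1.P ∩ inputs N1 (invA N1 φ p2),
    φ '' pre N1 p1 ⊆ pre N2 p2 ∧ ((pre N2 p2).Nonempty → (pre N1 p1).Nonempty)
  ref_out : ∀ p2 ∈ N2.P, ∀ p1 ∈ N1.P ∩ outputs N1 (invA N1 φ p2),
    φ '' post N1 p1 = post N2 p2
  ref_int : ∀ p2 ∈ N2.P, ∀ p1 ∈ N1.P ∩ invA N1 φ p2,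
    (p1 ∉ inputs N1 (invA N1 φ p2) → φ '' pre N1 p1 = {p2}) ∧
    (p1 ∉ outputs N1 (invA N1 φ p2) → φ '' post N1 p1 = {p2})
  ref_seq : ∀ p2 ∈ N2.P, ∀ p1 ∈ N1.P ∩ invA N1 φ p2,
    ∃ A, IsSeqComponent N1 A ∧ p1 ∈ A ∧
      ∀ t1 ∈ N1.T, φ t1 ∈ pre N2 p2 ∪ post N2 p2 → t1 ∈ nbh N1 A

/-- `N1` is well-marked w.r.t. `φ : N1 → N2`: every input place of a subnet refining an
initially marked place of `N2` is initially marked in `N1`. -/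
def WellMarked (N1 : Net X) (N2 : Net Y) (φ : X → Y) : Prop :=
  ∀ p2 ∈ N2.m0, ∀ p1 ∈ N1.P ∩ inputs N1 (invA N1 φ p2), p1 ∈ N1.m0

/-! ### Labeled GWF-nets -/

/-- Asynchronous channel actions: `send c` is "c!", `recv c` is "c?". -/
inductive ChanAct (C : Type) : Type
  | send : C → ChanAct C
  | recv : C → ChanAct C

/-- A labeled net over channels `C` and synchronous action names `S`. -/
structure LNet (X C S : Type) extends Net X where
  h : X → Option (ChanAct C)
  l : X → Option S
  k : X → Option C

structure IsLGWF (N : LNet X C S) : Prop where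
  gwf : IsGWF N.toNet
  h_dom : ∀ t, N.h t ≠ none → t ∈ N.T
  l_dom : ∀ t, N.l t ≠ none → t ∈ N.T
  k_dom : ∀ p, N.k p ≠ none → p ∈ N.P
  hl_disj : ∀ t, N.h t = none ∨ N.l t = none
  k_inj : ∀ p q c, N.k p = some c → N.k q = some c → p = q
  chan_conn : ∀ t1 t2 c, N.h t1 = some (ChanAct.send c) → N.h t2 = some (ChanAct.recv c) →
    ∃ p, N.k p = some c ∧ (t1, p) ∈ N.F ∧ (p, t2) ∈ N.F
  chan_pre : ∀ p c, N.k p = some c →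
    (pre N.toNet p).Nonempty ∧ ∀ t ∈ pre N.toNet p, N.h t = some (ChanAct.send c)
  chan_post : ∀ p c, N.k p = some c →
    (post N.toNet p).Nonempty ∧ ∀ t ∈ post N.toNet p, N.h t = some (ChanAct.recv c)

/-! ### α̂-morphisms -/

structure AlphaHatMorphism (N1 : LNet X C S) (N2 : LNet Y C S) (φ : X → Y)
    extends AlphaMorphism N1.toNet N2.toNet φ : Prop where
  final : φ '' N1.mf = N2.mf
  lab_to_trans : ∀ t ∈ N1.T, (N1.h t ≠ none ∨ N1.l t ≠ none) → φ t ∈ N2.T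
  h_pres : ∀ t ∈ N1.T, ∀ a, N1.h t = some a → N2.h (φ t) = some a
  l_pres : ∀ t ∈ N1.T, ∀ s, N1.l t = some s → N2.l (φ t) = some s

/-! ### AS-composition -/

/-- Nodes of the AS-composition of a net over `X` and a net over `Y`:
nodes of the components, fresh channel places, and merged (synchronized) transitions. -/
abbrev CNode (X Y C : Type) : Type := (X ⊕ Y) ⊕ (C ⊕ X × Y)

def inj1 : X → CNode X Y C := fun x => Sum.inl (Sum.inl x)
def inj2 : Y → CNode X Y C := fun y => Sum.inl (Sum.inr y)
def injc : C → CNode X Y C := fun c => Sum.inr (Sum.inl c)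
def injs : X × Y → CNode X Y C := fun q => Sum.inr (Sum.inr q)

/-- Pairs of transitions carrying a common synchronous label. -/
def syncPairs (N1 : LNet X C S) (N2 : LNet Y C S) : Set (X × Y) :=
  {q | q.1 ∈ N1.T ∧ q.2 ∈ N2.T ∧ ∃ s, N1.l q.1 = some s ∧ N2.l q.2 = some s}

/-- Channels for which both a sending and a receiving transition occur in the composition. -/
def chanSet (N1 : LNet X C S) (N2 : LNet Y C S) : Set C :=
  {c | ((∃ t ∈ N1.T, N1.h t = some (ChanAct.send c)) ∨
        (∃ t ∈ N2.T, N2.h t = some (ChanAct.send c))) ∧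
       ((∃ t ∈ N1.T, N1.h t = some (ChanAct.recv c)) ∨
        (∃ t ∈ N2.T, N2.h t = some (ChanAct.recv c)))}

def compF (N1 : LNet X C S) (N2 : LNet Y C S) : Set (CNode X Y C × CNode X Y C) :=
  {z | (∃ p t, p ∈ N1.P ∧ N1.k p = none ∧ t ∈ N1.T ∧ N1.l t = none ∧
          (((p, t) ∈ N1.F ∧ z = (inj1 p, inj1 t)) ∨ ((t, p) ∈ N1.F ∧ z = (inj1 t, inj1 p)))) ∨
       (∃ p t, p ∈ N2.P ∧ N2.k p = none ∧ t ∈ N2.T ∧ N2.l t = none ∧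
          (((p, t) ∈ N2.F ∧ z = (inj2 p, inj2 t)) ∨ ((t, p) ∈ N2.F ∧ z = (inj2 t, inj2 p)))) ∨
       (∃ p q, p ∈ N1.P ∧ N1.k p = none ∧ q ∈ syncPairs N1 N2 ∧
          (((p, q.1) ∈ N1.F ∧ z = (inj1 p, injs q)) ∨ ((q.1, p) ∈ N1.F ∧ z = (injs q, inj1 p)))) ∨
       (∃ p q, p ∈ N2.P ∧ N2.k p = none ∧ q ∈ syncPairs N1 N2 ∧
          (((p, q.2) ∈ N2.F ∧ z = (inj2 p, injs q)) ∨ ((q.2, p) ∈ N2.F ∧ z = (injs q, inj2 p)))) ∨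
       (∃ c t, c ∈ chanSet N1 N2 ∧ t ∈ N1.T ∧ N1.l t = none ∧
          ((N1.h t = some (ChanAct.send c) ∧ z = (inj1 t, injc c)) ∨
           (N1.h t = some (ChanAct.recv c) ∧ z = (injc c, inj1 t)))) ∨
       (∃ c t, c ∈ chanSet N1 N2 ∧ t ∈ N2.T ∧ N2.l t = none ∧
          ((N2.h t = some (ChanAct.send c) ∧ z = (inj2 t, injc c)) ∨
           (N2.h t = some (ChanAct.recv c) ∧ z = (injc c, inj2 t))))}

/-- The AS-composition `N1 ⊛ N2` of two labeled nets. -/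
noncomputable def AScomp (N1 : LNet X C S) (N2 : LNet Y C S) : LNet (CNode X Y C) C S where
  P := inj1 '' {p ∈ N1.P | N1.k p = none} ∪ inj2 '' {p ∈ N2.P | N2.k p = none} ∪
       injc '' chanSet N1 N2
  T := inj1 '' {t ∈ N1.T | N1.l t = none} ∪ inj2 '' {t ∈ N2.T | N2.l t = none} ∪
       injs '' syncPairs N1 N2
  F := compF N1 N2
  m0 := inj1 '' N1.m0 ∪ inj2 '' N2.m0
  mf := inj1 '' N1.mf ∪ inj2 '' N2.mf
  h := fun z => match z with
    | Sum.inl (Sum.inl t) => N1.h t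
    | Sum.inl (Sum.inr t) => N2.h t
    | _ => none
  l := fun z => match z with
    | Sum.inr (Sum.inr q) => N1.l q.1
    | _ => none
  k := fun z => match z with
    | Sum.inr (Sum.inl c) => if c ∈ chanSet N1 N2 then some c else none
    | _ => none

/-! ### Isomorphism of labeled marked nets -/

def LIso (N : LNet X C S) (M : LNet Y C S) : Prop :=
  ∃ f : X → Y, Set.BijOn f (nodes N.toNet) (nodes M.toNet) ∧
    f '' N.P = M.P ∧ f '' N.T = M.T ∧
    (∀ x ∈ nodes N.toNet, ∀ y ∈ nodes N.toNet, ((x, y) ∈ N.F ↔ (f x, f y) ∈ M.F)) ∧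
    f '' N.m0 = M.m0 ∧ f '' N.mf = M.mf ∧
    ∀ x ∈ nodes N.toNet, M.h (f x) = N.h x ∧ M.l (f x) = N.l x ∧ M.k (f x) = N.k x

/-! ### Local nets (for the unfolding condition) -/

/-- The local net `S2(p2)`: `p2` with its neighborhood transitions, completed with
artificial input and output places. -/
noncomputable def localNet2 (N2 : Net Y) (p2 : Y) : Net (Y ⊕ (Y ⊕ Y)) where
  P := {Sum.inl p2} ∪ (fun t => Sum.inr (Sum.inl t)) '' pre N2 p2 ∪
       (fun t => Sum.inr (Sum.inr t)) '' post N2 p2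
  T := Sum.inl '' (pre N2 p2 ∪ post N2 p2)
  F := {z | (∃ t ∈ pre N2 p2, z = (Sum.inr (Sum.inl t), Sum.inl t) ∨
              z = (Sum.inl t, Sum.inl p2)) ∨
            (∃ t ∈ post N2 p2, z = (Sum.inl p2, Sum.inl t) ∨
              z = (Sum.inl t, Sum.inr (Sum.inr t)))}
  m0 := if pre N2 p2 = ∅ then {Sum.inl p2} else (fun t => Sum.inr (Sum.inl t)) '' pre N2 p2
  mf := if post N2 p2 = ∅ then {Sum.inl p2} else (fun t => Sum.inr (Sum.inr t)) '' post N2 p2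

def preT (N1 : Net X) (N2 : Net Y) (φ : X → Y) (p2 : Y) : Set X :=
  {t ∈ N1.T | φ t ∈ pre N2 p2}

def postT (N1 : Net X) (N2 : Net Y) (φ : X → Y) (p2 : Y) : Set X :=
  {t ∈ N1.T | φ t ∈ post N2 p2}

/-- The local net `S1(p2)`: the subnet of `N1` refining `p2` together with the inverse
images of the neighborhood transitions of `p2`, completed with artificial input and
output places. -/
noncomputable def localNet1 (N1 : Net X) (N2 : Net Y) (φ : X → Y) (p2 : Y) :
    Net (X ⊕ (X ⊕ X)) where
  P := Sum.inl '' (N1.P ∩ invA N1 φ p2) ∪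
       (fun t => Sum.inr (Sum.inl t)) '' preT N1 N2 φ p2 ∪
       (fun t => Sum.inr (Sum.inr t)) '' postT N1 N2 φ p2
  T := Sum.inl '' ((N1.T ∩ invA N1 φ p2) ∪ preT N1 N2 φ p2 ∪ postT N1 N2 φ p2)
  F := {z | (∃ x y, (x, y) ∈ N1.F ∧
              x ∈ invA N1 φ p2 ∪ preT N1 N2 φ p2 ∪ postT N1 N2 φ p2 ∧
              y ∈ invA N1 φ p2 ∪ preT N1 N2 φ p2 ∪ postT N1 N2 φ p2 ∧
              z = (Sum.inl x, Sum.inl y)) ∨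
            (∃ t ∈ preT N1 N2 φ p2, z = (Sum.inr (Sum.inl t), Sum.inl t)) ∨
            (∃ t ∈ postT N1 N2 φ p2, z = (Sum.inl t, Sum.inr (Sum.inr t)))}
  m0 := if preT N1 N2 φ p2 = ∅ then Sum.inl '' (N1.P ∩ inputs N1 (invA N1 φ p2))
        else (fun t => Sum.inr (Sum.inl t)) '' preT N1 N2 φ p2
  mf := if postT N1 N2 φ p2 = ∅ then Sum.inl '' (N1.P ∩ outputs N1 (invA N1 φ p2))
        else (fun t => Sum.inr (Sum.inr t)) '' postT N1 N2 φ p2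

/-- The restriction of `φ` to local nets. -/
def localMap (φ : X → Y) : X ⊕ (X ⊕ X) → Y ⊕ (Y ⊕ Y) := Sum.map φ (Sum.map φ φ)

/-- `p2` is properly refined: its inverse image is not a set of places only. -/
def ProperlyRefined (N1 : Net X) (φ : X → Y) (p2 : Y) : Prop :=
  ¬ (invA N1 φ p2 ⊆ N1.P)

/-! ### Occurrence nets, branching processes, unfoldings -/

def causal (O : Net W) : W → W → Prop :=
  fun x y => Relation.ReflTransGen (fun a b => (a, b) ∈ O.F) x y

def conflict (O : Net W) (x y : W) : Prop :=
  ∃ tx ty, tx ∈ O.T ∧ ty ∈ O.T ∧ tx ≠ ty ∧ (pre O tx ∩ pre O ty).Nonempty ∧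
    causal O tx x ∧ causal O ty y

structure IsOccurrenceNet (O : Net W) : Prop where
  isNet : IsNet O
  pre_subsingleton : ∀ b ∈ O.P, (pre O b).Subsingleton
  antisymm : ∀ x y, causal O x y → causal O y x → x = y
  finite_past : ∀ x ∈ nodes O, {y | causal O y x}.Finite
  no_self_conflict : ∀ x ∈ nodes O, ¬ conflict O x x

def minNodes (O : Net W) : Set W := {b ∈ O.P | pre O b = ∅}

structure IsBranchingProcess (N : Net X) (O : Net W) (π : W → X) : Prop where
  occ : IsOccurrenceNet O
  pl : ∀ b ∈ O.P, π b ∈ N.P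
  tr : ∀ e ∈ O.T, π e ∈ N.T
  min_bij : Set.BijOn π (minNodes O) N.m0
  pre_bij : ∀ e ∈ O.T, Set.BijOn π (pre O e) (pre N (π e))
  post_bij : ∀ e ∈ O.T, Set.BijOn π (post O e) (post N (π e))
  no_dup : ∀ e1 ∈ O.T, ∀ e2 ∈ O.T, pre O e1 = pre O e2 → π e1 = π e2 → e1 = e2

/-- `(O, u)` is the unfolding of `N`: the maximal branching process, i.e. every branching
process of `N` is isomorphic to a subnet of `O` compatibly with the folding `u`. -/
def IsUnfolding (N : Net X) (O : Net W) (u : W → X) : Prop :=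
  IsBranchingProcess N O u ∧
  ∀ (W' : Type) (O' : Net W') (π' : W' → X), IsBranchingProcess N O' π' →
    ∃ j : W' → W, Set.InjOn j (nodes O') ∧ (∀ b ∈ O'.P, j b ∈ O.P) ∧
      (∀ e ∈ O'.T, j e ∈ O.T) ∧
      (∀ x ∈ nodes O', ∀ y ∈ nodes O', ((x, y) ∈ O'.F ↔ (j x, j y) ∈ O.F)) ∧
      ∀ x ∈ nodes O', u (j x) = π' x

end PNets

namespace PNets

lemma mem_invA_self {X Y : Type} {N1 : Net X} (φ : X → Y) {x : X} (hx : x ∈ nodes N1) :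
    x ∈ invA N1 φ (φ x) :=
  ⟨hx, rfl⟩

namespace AlphaMorphism

variable {X Y : Type} {N1 : Net X} {N2 : Net Y} {φ : X → Y}

lemma image_subset_places (hφ : AlphaMorphism N1 N2 φ) {s : Set X} (hs : s ⊆ N1.P) :
    φ '' s ⊆ N2.P :=
  hφ.places ▸ Set.image_mono hs

lemma map_mem_P (hφ : AlphaMorphism N1 N2 φ) {p : X} (hp : p ∈ N1.P) : φ p ∈ N2.P :=
  hφ.places ▸ Set.mem_image_of_mem φ hp

lemma map_arc (hφ : AlphaMorphism N1 N2 φ) (hnet1 : IsNet N1) {a b : X}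
    (hab : (a, b) ∈ N1.F) : φ a = φ b ∨ (φ a, φ b) ∈ N2.F := by
  rcases hnet1.flow_sub hab with ⟨-, hb⟩ | ⟨ha, -⟩
  · rcases hφ.maps ⟨b, Or.inr hb, rfl⟩ with hP | hT
    · have h : φ a ∈ φ '' (pre N1 b ∪ post N1 b) := ⟨a, Or.inl hab, rfl⟩
      rw [hφ.tp b hb hP] at h
      exact Or.inl h
    · have h : φ a ∈ φ '' pre N1 b := ⟨a, hab, rfl⟩
      rw [(hφ.tt b hb hT).1] at h
      exact Or.inr h
  · rcases hφ.maps ⟨a, Or.inr ha, rfl⟩ with hP | hT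
    · have h : φ b ∈ φ '' (pre N1 a ∪ post N1 a) := ⟨b, Or.inr hab, rfl⟩
      rw [hφ.tp a ha hP] at h
      exact Or.inl h.symm
    · have h : φ b ∈ φ '' post N1 a := ⟨b, hab, rfl⟩
      rw [(hφ.tt a ha hT).2] at h
      exact Or.inr h

lemma map_pathRel (hφ : AlphaMorphism N1 N2 φ) (hnet1 : IsNet N1) {x y : X}
    (hxy : pathRel N1 x y) : pathRel N2 (φ x) (φ y) := by
  induction hxy with
  | refl => exact Relation.ReflTransGen.refl
  | tail _ hbc ih =>
    rcases hφ.map_arc hnet1 hbc with heq | harc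
    · exact heq ▸ ih
    · exact ih.tail harc

/-- A source place of `N1` is an input place of the subnet refining its image, and
condition (5b) forbids such an input place to have an empty preset unless its image does. -/
lemma pre_eq_empty (hφ : AlphaMorphism N1 N2 φ) {p1 : X} (hp1 : p1 ∈ N1.P)
    (hpre : pre N1 p1 = ∅) : pre N2 (φ p1) = ∅ := by
  have hin : p1 ∈ N1.P ∩ inputs N1 (invA N1 φ (φ p1)) :=
    ⟨hp1, mem_invA_self φ (Or.inl hp1), Or.inr hpre⟩
  by_contra hne
  simpa [hpre] using (hφ.ref_in _ (hφ.map_mem_P hp1) p1 hin).2 (Set.nonempty_iff_ne_empty.2 hne)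

lemma post_eq_empty (hφ : AlphaMorphism N1 N2 φ) {p1 : X} (hp1 : p1 ∈ N1.P)
    (hpost : post N1 p1 = ∅) : post N2 (φ p1) = ∅ := by
  have hout : p1 ∈ N1.P ∩ outputs N1 (invA N1 φ (φ p1)) :=
    ⟨hp1, mem_invA_self φ (Or.inl hp1), Or.inr hpost⟩
  simpa [hpost] using (hφ.ref_out _ (hφ.map_mem_P hp1) p1 hout).symm

end AlphaMorphism

theorem alpha_preserves_gwf_structure_general
    {X Y : Type} (N1 : Net X) (N2 : Net Y) (φ : X → Y)
    (hnet2 : IsNet N2)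
    (hφ : AlphaMorphism N1 N2 φ)
    (hgwf1 : IsGWF N1) :
    N2.m0 = φ '' N1.m0 ∧ IsGWF { N2 with mf := φ '' N1.mf } := by
  refine ⟨hφ.init.symm, ?_⟩
  rw [← hφ.init]
  refine
    { isNet := { hnet2 with }
      m0_sub := hφ.image_subset_places hgwf1.m0_sub
      m0_ne := hgwf1.m0_ne.image φ
      m0_nopre := ?_
      mf_sub := hφ.image_subset_places hgwf1.mf_sub
      mf_ne := hgwf1.mf_ne.image φ
      mf_nopost := ?_
      connected := ?_ }
  · rintro _ ⟨p1, hp1, rfl⟩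
    exact hφ.pre_eq_empty (hgwf1.m0_sub hp1) (hgwf1.m0_nopre p1 hp1)
  · rintro _ ⟨p1, hp1, rfl⟩
    exact hφ.post_eq_empty (hgwf1.mf_sub hp1) (hgwf1.mf_nopost p1 hp1)
  · intro x2 hx2
    obtain ⟨x1, hx1, rfl⟩ := hφ.surj hx2
    obtain ⟨s, hs, f, hf, hsx, hxf⟩ := hgwf1.connected x1 hx1
    exact ⟨φ s, ⟨s, hs, rfl⟩, φ f, ⟨f, hf, rfl⟩,
      hφ.map_pathRel hgwf1.isNet hsx, hφ.map_pathRel hgwf1.isNet hxf⟩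

/-- α-morphisms preserve the structure of GWF-nets: if `N1` is a GWF-net,
then `N2` with initial marking `φ '' N1.m0 = N2.m0` and final marking `φ '' N1.mf` is a
GWF-net (in particular its initial places have empty presets, its final places have
empty postsets, and every node lies on a path from the initial to the final marking). -/
theorem alpha_preserves_gwf_structure
    {X Y : Type} (N1 : Net X) (N2 : Net Y) (φ : X → Y)
    (hnet1 : IsNet N1) (hnet2 : IsNet N2)
    (smd1 : SMD N1) (smd2 : SMD N2) (safe1 : Safe N1) (safe2 : Safe N2)
    (hφ : AlphaMorphism N1 N2 φ)
    (hgwf1 : IsGWF N1) :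
    N2.m0 = φ '' N1.m0 ∧ IsGWF { N2 with mf := φ '' N1.mf } :=
  alpha_preserves_gwf_structure_general N1 N2 φ hnet2 hφ hgwf1

end PNets
end

section
/- The AS-composition of LGWF-nets is associative up to isomorphism: for any LGWF-nets N1, N2, N3 with pairwise disjoint node sets, (N1 ⊛ N2) ⊛ N3 is isomorphic (as a labeled marked net, preserving arcs, initial and final markings, and all labels) to N1 ⊛ (N2 ⊛ N3). -/
open Classical

namespace PNets


section ASassoc

variable {X Y Z C S : Type}

@[simp] lemma AScomp_F (N1 : LNet X C S) (N2 : LNet Y C S) :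
    (AScomp N1 N2).F = compF N1 N2 := rfl

@[simp] lemma comp_h_inj1 (N1 : LNet X C S) (N2 : LNet Y C S) (x : X) :
    (AScomp N1 N2).h (inj1 x) = N1.h x := rfl
@[simp] lemma comp_h_inj2 (N1 : LNet X C S) (N2 : LNet Y C S) (y : Y) :
    (AScomp N1 N2).h (inj2 y) = N2.h y := rfl
@[simp] lemma comp_h_injc (N1 : LNet X C S) (N2 : LNet Y C S) (c : C) :
    (AScomp N1 N2).h (injc c) = none := rfl
@[simp] lemma comp_h_injs (N1 : LNet X C S) (N2 : LNet Y C S) (q : X × Y) :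
    (AScomp N1 N2).h (injs q) = none := rfl
@[simp] lemma comp_l_inj1 (N1 : LNet X C S) (N2 : LNet Y C S) (x : X) :
    (AScomp N1 N2).l (inj1 x) = none := rfl
@[simp] lemma comp_l_inj2 (N1 : LNet X C S) (N2 : LNet Y C S) (y : Y) :
    (AScomp N1 N2).l (inj2 y) = none := rfl
@[simp] lemma comp_l_injc (N1 : LNet X C S) (N2 : LNet Y C S) (c : C) :
    (AScomp N1 N2).l (injc c) = none := rfl
@[simp] lemma comp_l_injs (N1 : LNet X C S) (N2 : LNet Y C S) (q : X × Y) :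
    (AScomp N1 N2).l (injs q) = N1.l q.1 := rfl
@[simp] lemma comp_k_inj1 (N1 : LNet X C S) (N2 : LNet Y C S) (x : X) :
    (AScomp N1 N2).k (inj1 x) = none := rfl
@[simp] lemma comp_k_inj2 (N1 : LNet X C S) (N2 : LNet Y C S) (y : Y) :
    (AScomp N1 N2).k (inj2 y) = none := rfl
@[simp] lemma comp_k_injs (N1 : LNet X C S) (N2 : LNet Y C S) (q : X × Y) :
    (AScomp N1 N2).k (injs q) = none := rfl
lemma comp_k_injc (N1 : LNet X C S) (N2 : LNet Y C S) (c : C) :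
    (AScomp N1 N2).k (injc c) = if c ∈ chanSet N1 N2 then some c else none := rfl

lemma mem_comp_P {N1 : LNet X C S} {N2 : LNet Y C S} {w : CNode X Y C} :
    w ∈ (AScomp N1 N2).P ↔
      (∃ p, (p ∈ N1.P ∧ N1.k p = none) ∧ inj1 p = w) ∨
      (∃ p, (p ∈ N2.P ∧ N2.k p = none) ∧ inj2 p = w) ∨
      (∃ c, c ∈ chanSet N1 N2 ∧ injc c = w) := by
  simp [AScomp, Set.mem_image, Set.mem_union, Set.mem_setOf_eq, or_assoc]

lemma mem_comp_T {N1 : LNet X C S} {N2 : LNet Y C S} {w : CNode X Y C} :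
    w ∈ (AScomp N1 N2).T ↔
      (∃ t, (t ∈ N1.T ∧ N1.l t = none) ∧ inj1 t = w) ∨
      (∃ t, (t ∈ N2.T ∧ N2.l t = none) ∧ inj2 t = w) ∨
      (∃ q, q ∈ syncPairs N1 N2 ∧ injs q = w) := by
  simp [AScomp, Set.mem_image, Set.mem_union, Set.mem_setOf_eq, or_assoc]


/-- Synchronized triples. -/
def T123 (N1 : LNet X C S) (N2 : LNet Y C S) (N3 : LNet Z C S) : Set (X × Y × Z) :=
  {q | q.1 ∈ N1.T ∧ q.2.1 ∈ N2.T ∧ q.2.2 ∈ N3.T ∧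
    ∃ s, N1.l q.1 = some s ∧ N2.l q.2.1 = some s ∧ N3.l q.2.2 = some s}

/-- The global channel set. -/
def chanAll (N1 : LNet X C S) (N2 : LNet Y C S) (N3 : LNet Z C S) : Set C :=
  {c | ((∃ t ∈ N1.T, N1.h t = some (ChanAct.send c)) ∨
        (∃ t ∈ N2.T, N2.h t = some (ChanAct.send c)) ∨
        (∃ t ∈ N3.T, N3.h t = some (ChanAct.send c))) ∧
       ((∃ t ∈ N1.T, N1.h t = some (ChanAct.recv c)) ∨
        (∃ t ∈ N2.T, N2.h t = some (ChanAct.recv c)) ∨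
        (∃ t ∈ N3.T, N3.h t = some (ChanAct.recv c)))}

lemma comp_hT {N1 : LNet X C S} {N2 : LNet Y C S}
    (d1 : ∀ t, N1.h t = none ∨ N1.l t = none)
    (d2 : ∀ t, N2.h t = none ∨ N2.l t = none) (a : ChanAct C) :
    (∃ t ∈ (AScomp N1 N2).T, (AScomp N1 N2).h t = some a) ↔
      (∃ t ∈ N1.T, N1.h t = some a) ∨ (∃ t ∈ N2.T, N2.h t = some a) := by
  constructor
  · rintro ⟨t, ht, ha⟩
    rcases mem_comp_T.1 ht with ⟨t1, h1, rfl⟩ | ⟨t2, h2, rfl⟩ | ⟨q, -, rfl⟩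
    · exact Or.inl ⟨t1, h1.1, ha⟩
    · exact Or.inr ⟨t2, h2.1, ha⟩
    · simp at ha
  · rintro (⟨t1, h1, ha⟩ | ⟨t2, h2, ha⟩)
    · refine ⟨inj1 t1, mem_comp_T.2 (Or.inl ⟨t1, ⟨h1, ?_⟩, rfl⟩), ha⟩
      rcases d1 t1 with h | h
      · rw [ha] at h; cases h
      · exact h
    · refine ⟨inj2 t2, mem_comp_T.2 (Or.inr (Or.inl ⟨t2, ⟨h2, ?_⟩, rfl⟩)), ha⟩
      rcases d2 t2 with h | h
      · rw [ha] at h; cases h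
      · exact h

lemma chanSet_L (N1 : LNet X C S) (N2 : LNet Y C S) (N3 : LNet Z C S)
    (d1 : ∀ t, N1.h t = none ∨ N1.l t = none)
    (d2 : ∀ t, N2.h t = none ∨ N2.l t = none) :
    chanSet (AScomp N1 N2) N3 = chanAll N1 N2 N3 := by
  ext c
  simp only [chanSet, chanAll, Set.mem_setOf_eq, comp_hT d1 d2, or_assoc]

lemma chanSet_R (N1 : LNet X C S) (N2 : LNet Y C S) (N3 : LNet Z C S)
    (d2 : ∀ t, N2.h t = none ∨ N2.l t = none)
    (d3 : ∀ t, N3.h t = none ∨ N3.l t = none) :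
    chanSet N1 (AScomp N2 N3) = chanAll N1 N2 N3 := by
  ext c
  simp only [chanSet, chanAll, Set.mem_setOf_eq, comp_hT d2 d3, or_assoc]

lemma syncPairs_L (N1 : LNet X C S) (N2 : LNet Y C S) (N3 : LNet Z C S) :
    syncPairs (AScomp N1 N2) N3 =
      (fun q : X × Y × Z => (injs (q.1, q.2.1), q.2.2)) '' T123 N1 N2 N3 := by
  ext ⟨m, z⟩
  constructor
  · rintro ⟨hm, hz, s, hs, hs3⟩
    rcases mem_comp_T.1 hm with ⟨t1, -, rfl⟩ | ⟨t2, -, rfl⟩ | ⟨q, hq, rfl⟩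
    · simp at hs
    · simp at hs
    · obtain ⟨ht1, ht2, s', hs1, hs2⟩ := hq
      rw [comp_l_injs] at hs
      exact ⟨(q.1, q.2, z), ⟨ht1, ht2, hz, s, hs, hs1.symm.trans hs ▸ hs2, hs3⟩, rfl⟩
  · rintro ⟨⟨x, y, z'⟩, ⟨hx, hy, hz, s, h1, h2, h3⟩, heq⟩
    obtain ⟨h4, h5⟩ := Prod.mk.injEq .. ▸ heq
    subst h4; subst h5
    exact ⟨mem_comp_T.2 (Or.inr (Or.inr ⟨(x, y), ⟨hx, hy, s, h1, h2⟩, rfl⟩)), hz,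
      s, h1, h3⟩

lemma syncPairs_R (N1 : LNet X C S) (N2 : LNet Y C S) (N3 : LNet Z C S) :
    syncPairs N1 (AScomp N2 N3) =
      (fun q : X × Y × Z => (q.1, injs (q.2.1, q.2.2))) '' T123 N1 N2 N3 := by
  ext ⟨x, m⟩
  constructor
  · rintro ⟨hx, hm, s, hs1, hs⟩
    rcases mem_comp_T.1 hm with ⟨t1, -, rfl⟩ | ⟨t2, -, rfl⟩ | ⟨q, hq, rfl⟩
    · simp at hs
    · simp at hs
    · obtain ⟨ht2, ht3, s', hs2, hs3⟩ := hq
      rw [comp_l_injs] at hs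
      exact ⟨(x, q.1, q.2), ⟨hx, ht2, ht3, s, hs1, hs, hs2.symm.trans hs ▸ hs3⟩, rfl⟩
  · rintro ⟨⟨x', y, z⟩, ⟨hx, hy, hz, s, h1, h2, h3⟩, heq⟩
    obtain ⟨h4, h5⟩ := Prod.mk.injEq .. ▸ heq
    subst h4; subst h5
    exact ⟨hx, mem_comp_T.2 (Or.inr (Or.inr ⟨(y, z), ⟨hy, hz, s, h2, h3⟩, rfl⟩)),
      s, h1, h2⟩


lemma comp_P_filter (N1 : LNet X C S) (N2 : LNet Y C S) :
    {p | p ∈ (AScomp N1 N2).P ∧ (AScomp N1 N2).k p = none} =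
      inj1 '' {p | p ∈ N1.P ∧ N1.k p = none} ∪ inj2 '' {p | p ∈ N2.P ∧ N2.k p = none} := by
  ext w
  simp only [Set.mem_setOf_eq, Set.mem_union, Set.mem_image]
  constructor
  · rintro ⟨hw, hk⟩
    rcases mem_comp_P.1 hw with ⟨p, hp, rfl⟩ | ⟨p, hp, rfl⟩ | ⟨c, hc, rfl⟩
    · exact Or.inl ⟨p, hp, rfl⟩
    · exact Or.inr ⟨p, hp, rfl⟩
    · rw [comp_k_injc, if_pos hc] at hk; cases hk
  · rintro (⟨p, hp, rfl⟩ | ⟨p, hp, rfl⟩)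
    · exact ⟨mem_comp_P.2 (Or.inl ⟨p, hp, rfl⟩), rfl⟩
    · exact ⟨mem_comp_P.2 (Or.inr (Or.inl ⟨p, hp, rfl⟩)), rfl⟩

lemma comp_T_filter (N1 : LNet X C S) (N2 : LNet Y C S) :
    {t | t ∈ (AScomp N1 N2).T ∧ (AScomp N1 N2).l t = none} =
      inj1 '' {t | t ∈ N1.T ∧ N1.l t = none} ∪ inj2 '' {t | t ∈ N2.T ∧ N2.l t = none} := by
  ext w
  simp only [Set.mem_setOf_eq, Set.mem_union, Set.mem_image]
  constructor
  · rintro ⟨hw, hl⟩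
    rcases mem_comp_T.1 hw with ⟨t, ht, rfl⟩ | ⟨t, ht, rfl⟩ | ⟨q, hq, rfl⟩
    · exact Or.inl ⟨t, ht, rfl⟩
    · exact Or.inr ⟨t, ht, rfl⟩
    · obtain ⟨-, -, s, hs, -⟩ := hq
      rw [comp_l_injs, hs] at hl; cases hl
  · rintro (⟨t, ht, rfl⟩ | ⟨t, ht, rfl⟩)
    · exact ⟨mem_comp_T.2 (Or.inl ⟨t, ht, rfl⟩), rfl⟩
    · exact ⟨mem_comp_T.2 (Or.inr (Or.inl ⟨t, ht, rfl⟩)), rfl⟩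

/-- The associativity isomorphism map. -/
def assocMap : CNode (CNode X Y C) Z C → CNode X (CNode Y Z C) C
  | Sum.inl (Sum.inl (Sum.inl (Sum.inl x))) => inj1 x
  | Sum.inl (Sum.inl (Sum.inl (Sum.inr y))) => inj2 (inj1 y)
  | Sum.inl (Sum.inl (Sum.inr (Sum.inl c))) => inj2 (injc c)
  | Sum.inl (Sum.inl (Sum.inr (Sum.inr q))) => injs (q.1, inj1 q.2)
  | Sum.inl (Sum.inr z) => inj2 (inj2 z)
  | Sum.inr (Sum.inl c) => injc c
  | Sum.inr (Sum.inr (Sum.inl (Sum.inl x), z)) => injs (x, inj2 z)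
  | Sum.inr (Sum.inr (Sum.inl (Sum.inr y), z)) => inj2 (injs (y, z))
  | Sum.inr (Sum.inr (Sum.inr (Sum.inl c), _)) => inj2 (injc c)
  | Sum.inr (Sum.inr (Sum.inr (Sum.inr q), z)) => injs (q.1, injs (q.2, z))

@[simp] lemma assocMap_11 (x : X) :
    (assocMap (inj1 (inj1 x)) : CNode X (CNode Y Z C) C) = inj1 x := rfl
@[simp] lemma assocMap_12 (y : Y) :
    (assocMap (inj1 (inj2 y)) : CNode X (CNode Y Z C) C) = inj2 (inj1 y) := rfl
@[simp] lemma assocMap_1c (c : C) :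
    (assocMap (inj1 (injc c)) : CNode X (CNode Y Z C) C) = inj2 (injc c) := rfl
@[simp] lemma assocMap_1s (q : X × Y) :
    (assocMap (inj1 (injs q)) : CNode X (CNode Y Z C) C) = injs (q.1, inj1 q.2) := rfl
@[simp] lemma assocMap_2 (z : Z) :
    (assocMap (inj2 z) : CNode X (CNode Y Z C) C) = inj2 (inj2 z) := rfl
@[simp] lemma assocMap_c (c : C) :
    (assocMap (injc c) : CNode X (CNode Y Z C) C) = injc c := rfl
@[simp] lemma assocMap_s1 (x : X) (z : Z) :
    (assocMap (injs (inj1 x, z)) : CNode X (CNode Y Z C) C) = injs (x, inj2 z) := rfl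
@[simp] lemma assocMap_s2 (y : Y) (z : Z) :
    (assocMap (injs (inj2 y, z)) : CNode X (CNode Y Z C) C) = inj2 (injs (y, z)) := rfl
@[simp] lemma assocMap_sc (c : C) (z : Z) :
    (assocMap (injs (injc c, z)) : CNode X (CNode Y Z C) C) = inj2 (injc c) := rfl
@[simp] lemma assocMap_ss (q : X × Y) (z : Z) :
    (assocMap (injs (injs q, z)) : CNode X (CNode Y Z C) C) = injs (q.1, injs (q.2, z)) := rfl

lemma assocMap_eq_inj1 {u : CNode (CNode X Y C) Z C} {x : X}
    (h : assocMap u = inj1 x) : u = inj1 (inj1 x) := by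
  rcases u with ((((x'|y')|(c'|q'))|z')|(c'|⟨((x'|y')|(c'|q')), z'⟩)) <;>
    simp_all [assocMap, inj1, inj2, injc, injs]

lemma assocMap_eq_inj21 {u : CNode (CNode X Y C) Z C} {y : Y}
    (h : assocMap u = inj2 (inj1 y)) : u = inj1 (inj2 y) := by
  rcases u with ((((x'|y')|(c'|q'))|z')|(c'|⟨((x'|y')|(c'|q')), z'⟩)) <;>
    simp_all [assocMap, inj1, inj2, injc, injs]

lemma assocMap_eq_inj22 {u : CNode (CNode X Y C) Z C} {z : Z}
    (h : assocMap u = inj2 (inj2 z)) : u = inj2 z := by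
  rcases u with ((((x'|y')|(c'|q'))|z')|(c'|⟨((x'|y')|(c'|q')), z'⟩)) <;>
    simp_all [assocMap, inj1, inj2, injc, injs]

lemma assocMap_eq_injc {u : CNode (CNode X Y C) Z C} {c : C}
    (h : assocMap u = injc c) : u = injc c := by
  rcases u with ((((x'|y')|(c'|q'))|z')|(c'|⟨((x'|y')|(c'|q')), z'⟩)) <;>
    simp_all [assocMap, inj1, inj2, injc, injs]

lemma assocMap_eq_injss {u : CNode (CNode X Y C) Z C} {x : X} {y : Y} {z : Z}
    (h : assocMap u = injs (x, injs (y, z))) : u = injs (injs (x, y), z) := by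
  rcases u with ((((x'|y')|(c'|q'))|z')|(c'|⟨((x'|y')|(c'|q')), z'⟩)) <;>
    simp_all [assocMap, inj1, inj2, injc, injs, Prod.ext_iff]


/-- Canonical description of the arcs of a triple composition, relative to embeddings. -/
def arcSpec {D : Type} (N1 : LNet X C S) (N2 : LNet Y C S) (N3 : LNet Z C S)
    (e1 : X → D) (e2 : Y → D) (e3 : Z → D) (ec : C → D) (es : X × Y × Z → D) :
    Set (D × D) :=
  {z | (∃ p t, p ∈ N1.P ∧ N1.k p = none ∧ t ∈ N1.T ∧ N1.l t = none ∧
          (((p, t) ∈ N1.F ∧ z = (e1 p, e1 t)) ∨ ((t, p) ∈ N1.F ∧ z = (e1 t, e1 p)))) ∨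
       (∃ p t, p ∈ N2.P ∧ N2.k p = none ∧ t ∈ N2.T ∧ N2.l t = none ∧
          (((p, t) ∈ N2.F ∧ z = (e2 p, e2 t)) ∨ ((t, p) ∈ N2.F ∧ z = (e2 t, e2 p)))) ∨
       (∃ p t, p ∈ N3.P ∧ N3.k p = none ∧ t ∈ N3.T ∧ N3.l t = none ∧
          (((p, t) ∈ N3.F ∧ z = (e3 p, e3 t)) ∨ ((t, p) ∈ N3.F ∧ z = (e3 t, e3 p)))) ∨
       (∃ p q, p ∈ N1.P ∧ N1.k p = none ∧ q ∈ T123 N1 N2 N3 ∧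
          (((p, q.1) ∈ N1.F ∧ z = (e1 p, es q)) ∨ ((q.1, p) ∈ N1.F ∧ z = (es q, e1 p)))) ∨
       (∃ p q, p ∈ N2.P ∧ N2.k p = none ∧ q ∈ T123 N1 N2 N3 ∧
          (((p, q.2.1) ∈ N2.F ∧ z = (e2 p, es q)) ∨ ((q.2.1, p) ∈ N2.F ∧ z = (es q, e2 p)))) ∨
       (∃ p q, p ∈ N3.P ∧ N3.k p = none ∧ q ∈ T123 N1 N2 N3 ∧
          (((p, q.2.2) ∈ N3.F ∧ z = (e3 p, es q)) ∨ ((q.2.2, p) ∈ N3.F ∧ z = (es q, e3 p)))) ∨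
       (∃ c t, c ∈ chanAll N1 N2 N3 ∧ t ∈ N1.T ∧ N1.l t = none ∧
          ((N1.h t = some (ChanAct.send c) ∧ z = (e1 t, ec c)) ∨
           (N1.h t = some (ChanAct.recv c) ∧ z = (ec c, e1 t)))) ∨
       (∃ c t, c ∈ chanAll N1 N2 N3 ∧ t ∈ N2.T ∧ N2.l t = none ∧
          ((N2.h t = some (ChanAct.send c) ∧ z = (e2 t, ec c)) ∨
           (N2.h t = some (ChanAct.recv c) ∧ z = (ec c, e2 t)))) ∨
       (∃ c t, c ∈ chanAll N1 N2 N3 ∧ t ∈ N3.T ∧ N3.l t = none ∧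
          ((N3.h t = some (ChanAct.send c) ∧ z = (e3 t, ec c)) ∨
           (N3.h t = some (ChanAct.recv c) ∧ z = (ec c, e3 t))))}


set_option maxHeartbeats 1000000 in
lemma memF_L (N1 : LNet X C S) (N2 : LNet Y C S) (N3 : LNet Z C S)
    (d1 : ∀ t, N1.h t = none ∨ N1.l t = none)
    (d2 : ∀ t, N2.h t = none ∨ N2.l t = none) :
    (AScomp (AScomp N1 N2) N3).F = arcSpec N1 N2 N3
      (fun x => inj1 (inj1 x)) (fun y => inj1 (inj2 y)) inj2 injc
      (fun q => injs (injs (q.1, q.2.1), q.2.2)) := by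
  ext z
  simp only [AScomp_F, compF, arcSpec, Set.mem_setOf_eq, mem_comp_P, mem_comp_T,
    chanSet_L N1 N2 N3 d1 d2, Prod.mk.injEq]
  constructor
  · rintro (h|h|h|h|h|h)
    · obtain ⟨p, t, hp, hk, ht, hl, harc⟩ := h
      rcases harc with ⟨hf, rfl⟩|⟨hf, rfl⟩ <;>
        rcases hf with ⟨p1,t1,a1,a2,a3,a4,(⟨hf1,rfl,rfl⟩|⟨hf1,rfl,rfl⟩)⟩|
          ⟨p1,t1,a1,a2,a3,a4,(⟨hf1,rfl,rfl⟩|⟨hf1,rfl,rfl⟩)⟩|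
          ⟨p1,q,a1,a2,hq,(⟨hf1,rfl,rfl⟩|⟨hf1,rfl,rfl⟩)⟩|
          ⟨p1,q,a1,a2,hq,(⟨hf1,rfl,rfl⟩|⟨hf1,rfl,rfl⟩)⟩|
          ⟨c,t1,hc,a3,a4,(⟨hf1,rfl,rfl⟩|⟨hf1,rfl,rfl⟩)⟩|
          ⟨c,t1,hc,a3,a4,(⟨hf1,rfl,rfl⟩|⟨hf1,rfl,rfl⟩)⟩ <;>
        first
        | exact Or.inl ⟨p1, t1, a1, a2, a3, a4, Or.inl ⟨hf1, rfl⟩⟩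
        | exact Or.inl ⟨p1, t1, a1, a2, a3, a4, Or.inr ⟨hf1, rfl⟩⟩
        | exact Or.inr (Or.inl ⟨p1, t1, a1, a2, a3, a4, Or.inl ⟨hf1, rfl⟩⟩)
        | exact Or.inr (Or.inl ⟨p1, t1, a1, a2, a3, a4, Or.inr ⟨hf1, rfl⟩⟩)
        | (obtain ⟨-, -, s, hs, -⟩ := hq; rw [comp_l_injs, hs] at hl; cases hl)
        | (simp [inj1, inj2, injc, injs] at hp; done)
        | (simp [inj1, inj2, injc, injs] at ht; done)
        | (rw [comp_k_injc] at hk; simp [hc] at hk; done)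
    · obtain ⟨p, t, hp, hk, ht, hl, harc⟩ := h
      rcases harc with ⟨hf, rfl⟩|⟨hf, rfl⟩
      · exact Or.inr (Or.inr (Or.inl ⟨p, t, hp, hk, ht, hl, Or.inl ⟨hf, rfl⟩⟩))
      · exact Or.inr (Or.inr (Or.inl ⟨p, t, hp, hk, ht, hl, Or.inr ⟨hf, rfl⟩⟩))
    · obtain ⟨p, q, hp, hk, hq, harc⟩ := h
      rw [syncPairs_L] at hq
      obtain ⟨⟨x, y, w⟩, hq', rfl⟩ := hq
      rcases harc with ⟨hf, rfl⟩|⟨hf, rfl⟩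
      · rcases hf with ⟨p1,t1,a1,a2,a3,a4,(⟨hf1,rfl,hE⟩|⟨hf1,rfl,hE⟩)⟩|
          ⟨p1,t1,a1,a2,a3,a4,(⟨hf1,rfl,hE⟩|⟨hf1,rfl,hE⟩)⟩|
          ⟨p1,q2,a1,a2,hq2,(⟨hf1,rfl,hE⟩|⟨hf1,rfl,hE⟩)⟩|
          ⟨p1,q2,a1,a2,hq2,(⟨hf1,rfl,hE⟩|⟨hf1,rfl,hE⟩)⟩|
          ⟨c,t1,hc,a3,a4,(⟨hf1,rfl,hE⟩|⟨hf1,rfl,hE⟩)⟩|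
          ⟨c,t1,hc,a3,a4,(⟨hf1,rfl,hE⟩|⟨hf1,rfl,hE⟩)⟩ <;>
        first
        | (simp [injs, inj1, inj2, injc] at hE; done)
        | (simp only [injs, Sum.inr.injEq] at hE
           subst hE
           first
           | exact Or.inr (Or.inr (Or.inr (Or.inl
               ⟨p1, (x, y, w), a1, a2, hq', Or.inl ⟨hf1, rfl⟩⟩)))
           | exact Or.inr (Or.inr (Or.inr (Or.inr (Or.inl
               ⟨p1, (x, y, w), a1, a2, hq', Or.inl ⟨hf1, rfl⟩⟩)))))
      · rcases hf with ⟨p1,t1,a1,a2,a3,a4,(⟨hf1,hE,rfl⟩|⟨hf1,hE,rfl⟩)⟩|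
          ⟨p1,t1,a1,a2,a3,a4,(⟨hf1,hE,rfl⟩|⟨hf1,hE,rfl⟩)⟩|
          ⟨p1,q2,a1,a2,hq2,(⟨hf1,hE,rfl⟩|⟨hf1,hE,rfl⟩)⟩|
          ⟨p1,q2,a1,a2,hq2,(⟨hf1,hE,rfl⟩|⟨hf1,hE,rfl⟩)⟩|
          ⟨c,t1,hc,a3,a4,(⟨hf1,hE,rfl⟩|⟨hf1,hE,rfl⟩)⟩|
          ⟨c,t1,hc,a3,a4,(⟨hf1,hE,rfl⟩|⟨hf1,hE,rfl⟩)⟩ <;>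
        first
        | (simp [injs, inj1, inj2, injc] at hE; done)
        | (simp only [injs, Sum.inr.injEq] at hE
           subst hE
           first
           | exact Or.inr (Or.inr (Or.inr (Or.inl
               ⟨p1, (x, y, w), a1, a2, hq', Or.inr ⟨hf1, rfl⟩⟩)))
           | exact Or.inr (Or.inr (Or.inr (Or.inr (Or.inl
               ⟨p1, (x, y, w), a1, a2, hq', Or.inr ⟨hf1, rfl⟩⟩)))))
    · obtain ⟨p, q, hp, hk, hq, harc⟩ := h
      rw [syncPairs_L] at hq
      obtain ⟨⟨x, y, w⟩, hq', rfl⟩ := hq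
      rcases harc with ⟨hf, rfl⟩|⟨hf, rfl⟩
      · exact Or.inr (Or.inr (Or.inr (Or.inr (Or.inr (Or.inl
          ⟨p, (x, y, w), hp, hk, hq', Or.inl ⟨hf, rfl⟩⟩)))))
      · exact Or.inr (Or.inr (Or.inr (Or.inr (Or.inr (Or.inl
          ⟨p, (x, y, w), hp, hk, hq', Or.inr ⟨hf, rfl⟩⟩)))))
    · obtain ⟨c, t, hc, hT, hl, harc⟩ := h
      rcases hT with ⟨t1, ⟨b1, b2⟩, rfl⟩|⟨t1, ⟨b1, b2⟩, rfl⟩|⟨q, hq, rfl⟩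
      · rcases harc with ⟨hh, rfl⟩|⟨hh, rfl⟩
        · exact Or.inr (Or.inr (Or.inr (Or.inr (Or.inr (Or.inr (Or.inl
            ⟨c, t1, hc, b1, b2, Or.inl ⟨hh, rfl⟩⟩))))))
        · exact Or.inr (Or.inr (Or.inr (Or.inr (Or.inr (Or.inr (Or.inl
            ⟨c, t1, hc, b1, b2, Or.inr ⟨hh, rfl⟩⟩))))))
      · rcases harc with ⟨hh, rfl⟩|⟨hh, rfl⟩
        · exact Or.inr (Or.inr (Or.inr (Or.inr (Or.inr (Or.inr (Or.inr (Or.inl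
            ⟨c, t1, hc, b1, b2, Or.inl ⟨hh, rfl⟩⟩)))))))
        · exact Or.inr (Or.inr (Or.inr (Or.inr (Or.inr (Or.inr (Or.inr (Or.inl
            ⟨c, t1, hc, b1, b2, Or.inr ⟨hh, rfl⟩⟩)))))))
      · rcases harc with ⟨hh, -⟩|⟨hh, -⟩ <;> simp at hh
    · obtain ⟨c, t, hc, hT, hl, harc⟩ := h
      rcases harc with ⟨hh, rfl⟩|⟨hh, rfl⟩
      · exact Or.inr (Or.inr (Or.inr (Or.inr (Or.inr (Or.inr (Or.inr (Or.inr
          ⟨c, t, hc, hT, hl, Or.inl ⟨hh, rfl⟩⟩)))))))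
      · exact Or.inr (Or.inr (Or.inr (Or.inr (Or.inr (Or.inr (Or.inr (Or.inr
          ⟨c, t, hc, hT, hl, Or.inr ⟨hh, rfl⟩⟩)))))))
  · rintro (⟨p,t,hp,hk,ht,hl,(⟨hf,rfl⟩|⟨hf,rfl⟩)⟩|⟨p,t,hp,hk,ht,hl,(⟨hf,rfl⟩|⟨hf,rfl⟩)⟩|
      ⟨p,t,hp,hk,ht,hl,(⟨hf,rfl⟩|⟨hf,rfl⟩)⟩|⟨p,⟨x,y,w⟩,hp,hk,hq,(⟨hf,rfl⟩|⟨hf,rfl⟩)⟩|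
      ⟨p,⟨x,y,w⟩,hp,hk,hq,(⟨hf,rfl⟩|⟨hf,rfl⟩)⟩|⟨p,⟨x,y,w⟩,hp,hk,hq,(⟨hf,rfl⟩|⟨hf,rfl⟩)⟩|
      ⟨c,t,hc,ht,hl,(⟨hh,rfl⟩|⟨hh,rfl⟩)⟩|⟨c,t,hc,ht,hl,(⟨hh,rfl⟩|⟨hh,rfl⟩)⟩|
      ⟨c,t,hc,ht,hl,(⟨hh,rfl⟩|⟨hh,rfl⟩)⟩)
    · exact Or.inl ⟨inj1 p, inj1 t, Or.inl ⟨p, ⟨hp, hk⟩, rfl⟩, rfl,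
        Or.inl ⟨t, ⟨ht, hl⟩, rfl⟩, rfl,
        Or.inl ⟨Or.inl ⟨p, t, hp, hk, ht, hl, Or.inl ⟨hf, rfl, rfl⟩⟩, rfl⟩⟩
    · exact Or.inl ⟨inj1 p, inj1 t, Or.inl ⟨p, ⟨hp, hk⟩, rfl⟩, rfl,
        Or.inl ⟨t, ⟨ht, hl⟩, rfl⟩, rfl,
        Or.inr ⟨Or.inl ⟨p, t, hp, hk, ht, hl, Or.inr ⟨hf, rfl, rfl⟩⟩, rfl⟩⟩
    · exact Or.inl ⟨inj2 p, inj2 t, Or.inr (Or.inl ⟨p, ⟨hp, hk⟩, rfl⟩), rfl,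
        Or.inr (Or.inl ⟨t, ⟨ht, hl⟩, rfl⟩), rfl,
        Or.inl ⟨Or.inr (Or.inl ⟨p, t, hp, hk, ht, hl, Or.inl ⟨hf, rfl, rfl⟩⟩), rfl⟩⟩
    · exact Or.inl ⟨inj2 p, inj2 t, Or.inr (Or.inl ⟨p, ⟨hp, hk⟩, rfl⟩), rfl,
        Or.inr (Or.inl ⟨t, ⟨ht, hl⟩, rfl⟩), rfl,
        Or.inr ⟨Or.inr (Or.inl ⟨p, t, hp, hk, ht, hl, Or.inr ⟨hf, rfl, rfl⟩⟩), rfl⟩⟩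
    · exact Or.inr (Or.inl ⟨p, t, hp, hk, ht, hl, Or.inl ⟨hf, rfl⟩⟩)
    · exact Or.inr (Or.inl ⟨p, t, hp, hk, ht, hl, Or.inr ⟨hf, rfl⟩⟩)
    · obtain ⟨q1, q2, q3, s, s1, s2, s3⟩ := hq
      exact Or.inr (Or.inr (Or.inl ⟨inj1 p, (injs (x, y), w), Or.inl ⟨p, ⟨hp, hk⟩, rfl⟩, rfl,
        (by rw [syncPairs_L]; exact ⟨(x, y, w), ⟨q1, q2, q3, s, s1, s2, s3⟩, rfl⟩),
        Or.inl ⟨Or.inr (Or.inr (Or.inl ⟨p, (x, y), hp, hk, ⟨q1, q2, s, s1, s2⟩,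
          Or.inl ⟨hf, rfl, rfl⟩⟩)), rfl⟩⟩))
    · obtain ⟨q1, q2, q3, s, s1, s2, s3⟩ := hq
      exact Or.inr (Or.inr (Or.inl ⟨inj1 p, (injs (x, y), w), Or.inl ⟨p, ⟨hp, hk⟩, rfl⟩, rfl,
        (by rw [syncPairs_L]; exact ⟨(x, y, w), ⟨q1, q2, q3, s, s1, s2, s3⟩, rfl⟩),
        Or.inr ⟨Or.inr (Or.inr (Or.inl ⟨p, (x, y), hp, hk, ⟨q1, q2, s, s1, s2⟩,
          Or.inr ⟨hf, rfl, rfl⟩⟩)), rfl⟩⟩))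
    · obtain ⟨q1, q2, q3, s, s1, s2, s3⟩ := hq
      exact Or.inr (Or.inr (Or.inl ⟨inj2 p, (injs (x, y), w), Or.inr (Or.inl ⟨p, ⟨hp, hk⟩, rfl⟩), rfl,
        (by rw [syncPairs_L]; exact ⟨(x, y, w), ⟨q1, q2, q3, s, s1, s2, s3⟩, rfl⟩),
        Or.inl ⟨Or.inr (Or.inr (Or.inr (Or.inl ⟨p, (x, y), hp, hk, ⟨q1, q2, s, s1, s2⟩,
          Or.inl ⟨hf, rfl, rfl⟩⟩))), rfl⟩⟩))
    · obtain ⟨q1, q2, q3, s, s1, s2, s3⟩ := hq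
      exact Or.inr (Or.inr (Or.inl ⟨inj2 p, (injs (x, y), w), Or.inr (Or.inl ⟨p, ⟨hp, hk⟩, rfl⟩), rfl,
        (by rw [syncPairs_L]; exact ⟨(x, y, w), ⟨q1, q2, q3, s, s1, s2, s3⟩, rfl⟩),
        Or.inr ⟨Or.inr (Or.inr (Or.inr (Or.inl ⟨p, (x, y), hp, hk, ⟨q1, q2, s, s1, s2⟩,
          Or.inr ⟨hf, rfl, rfl⟩⟩))), rfl⟩⟩))
    · obtain ⟨q1, q2, q3, s, s1, s2, s3⟩ := hq
      exact Or.inr (Or.inr (Or.inr (Or.inl ⟨p, (injs (x, y), w), hp, hk,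
        (by rw [syncPairs_L]; exact ⟨(x, y, w), ⟨q1, q2, q3, s, s1, s2, s3⟩, rfl⟩),
        Or.inl ⟨hf, rfl⟩⟩)))
    · obtain ⟨q1, q2, q3, s, s1, s2, s3⟩ := hq
      exact Or.inr (Or.inr (Or.inr (Or.inl ⟨p, (injs (x, y), w), hp, hk,
        (by rw [syncPairs_L]; exact ⟨(x, y, w), ⟨q1, q2, q3, s, s1, s2, s3⟩, rfl⟩),
        Or.inr ⟨hf, rfl⟩⟩)))
    · exact Or.inr (Or.inr (Or.inr (Or.inr (Or.inl ⟨c, inj1 t, hc,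
        Or.inl ⟨t, ⟨ht, hl⟩, rfl⟩, rfl, Or.inl ⟨hh, rfl⟩⟩))))
    · exact Or.inr (Or.inr (Or.inr (Or.inr (Or.inl ⟨c, inj1 t, hc,
        Or.inl ⟨t, ⟨ht, hl⟩, rfl⟩, rfl, Or.inr ⟨hh, rfl⟩⟩))))
    · exact Or.inr (Or.inr (Or.inr (Or.inr (Or.inl ⟨c, inj2 t, hc,
        Or.inr (Or.inl ⟨t, ⟨ht, hl⟩, rfl⟩), rfl, Or.inl ⟨hh, rfl⟩⟩))))
    · exact Or.inr (Or.inr (Or.inr (Or.inr (Or.inl ⟨c, inj2 t, hc,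
        Or.inr (Or.inl ⟨t, ⟨ht, hl⟩, rfl⟩), rfl, Or.inr ⟨hh, rfl⟩⟩))))
    · exact Or.inr (Or.inr (Or.inr (Or.inr (Or.inr ⟨c, t, hc, ht, hl, Or.inl ⟨hh, rfl⟩⟩))))
    · exact Or.inr (Or.inr (Or.inr (Or.inr (Or.inr ⟨c, t, hc, ht, hl, Or.inr ⟨hh, rfl⟩⟩))))


set_option maxHeartbeats 1000000 in
lemma memF_R (N1 : LNet X C S) (N2 : LNet Y C S) (N3 : LNet Z C S)
    (d2 : ∀ t, N2.h t = none ∨ N2.l t = none)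
    (d3 : ∀ t, N3.h t = none ∨ N3.l t = none) :
    (AScomp N1 (AScomp N2 N3)).F = arcSpec N1 N2 N3
      inj1 (fun y => inj2 (inj1 y)) (fun z => inj2 (inj2 z)) injc
      (fun q => injs (q.1, injs (q.2.1, q.2.2))) := by
  ext z
  simp only [AScomp_F, compF, arcSpec, Set.mem_setOf_eq, mem_comp_P, mem_comp_T,
    chanSet_R N1 N2 N3 d2 d3, Prod.mk.injEq]
  constructor
  · rintro (h|h|h|h|h|h)
    · obtain ⟨p, t, hp, hk, ht, hl, harc⟩ := h
      rcases harc with ⟨hf, rfl⟩|⟨hf, rfl⟩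
      · exact Or.inl ⟨p, t, hp, hk, ht, hl, Or.inl ⟨hf, rfl⟩⟩
      · exact Or.inl ⟨p, t, hp, hk, ht, hl, Or.inr ⟨hf, rfl⟩⟩
    · obtain ⟨p, t, hp, hk, ht, hl, harc⟩ := h
      rcases harc with ⟨hf, rfl⟩|⟨hf, rfl⟩ <;>
        rcases hf with ⟨p1,t1,a1,a2,a3,a4,(⟨hf1,rfl,rfl⟩|⟨hf1,rfl,rfl⟩)⟩|
          ⟨p1,t1,a1,a2,a3,a4,(⟨hf1,rfl,rfl⟩|⟨hf1,rfl,rfl⟩)⟩|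
          ⟨p1,q,a1,a2,hq,(⟨hf1,rfl,rfl⟩|⟨hf1,rfl,rfl⟩)⟩|
          ⟨p1,q,a1,a2,hq,(⟨hf1,rfl,rfl⟩|⟨hf1,rfl,rfl⟩)⟩|
          ⟨c,t1,hc,a3,a4,(⟨hf1,rfl,rfl⟩|⟨hf1,rfl,rfl⟩)⟩|
          ⟨c,t1,hc,a3,a4,(⟨hf1,rfl,rfl⟩|⟨hf1,rfl,rfl⟩)⟩ <;>
        first
        | exact Or.inr (Or.inl ⟨p1, t1, a1, a2, a3, a4, Or.inl ⟨hf1, rfl⟩⟩)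
        | exact Or.inr (Or.inl ⟨p1, t1, a1, a2, a3, a4, Or.inr ⟨hf1, rfl⟩⟩)
        | exact Or.inr (Or.inr (Or.inl ⟨p1, t1, a1, a2, a3, a4, Or.inl ⟨hf1, rfl⟩⟩))
        | exact Or.inr (Or.inr (Or.inl ⟨p1, t1, a1, a2, a3, a4, Or.inr ⟨hf1, rfl⟩⟩))
        | (obtain ⟨-, -, s, hs, -⟩ := hq; rw [comp_l_injs, hs] at hl; cases hl)
        | (simp [inj1, inj2, injc, injs] at hp; done)
        | (simp [inj1, inj2, injc, injs] at ht; done)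
        | (rw [comp_k_injc] at hk; simp [hc] at hk; done)
    · obtain ⟨p, q, hp, hk, hq, harc⟩ := h
      rw [syncPairs_R] at hq
      obtain ⟨⟨x, y, w⟩, hq', rfl⟩ := hq
      rcases harc with ⟨hf, rfl⟩|⟨hf, rfl⟩
      · exact Or.inr (Or.inr (Or.inr (Or.inl ⟨p, (x, y, w), hp, hk, hq', Or.inl ⟨hf, rfl⟩⟩)))
      · exact Or.inr (Or.inr (Or.inr (Or.inl ⟨p, (x, y, w), hp, hk, hq', Or.inr ⟨hf, rfl⟩⟩)))
    · obtain ⟨p, q, hp, hk, hq, harc⟩ := h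
      rw [syncPairs_R] at hq
      obtain ⟨⟨x, y, w⟩, hq', rfl⟩ := hq
      rcases harc with ⟨hf, rfl⟩|⟨hf, rfl⟩
      · rcases hf with ⟨p1,t1,a1,a2,a3,a4,(⟨hf1,rfl,hE⟩|⟨hf1,rfl,hE⟩)⟩|
          ⟨p1,t1,a1,a2,a3,a4,(⟨hf1,rfl,hE⟩|⟨hf1,rfl,hE⟩)⟩|
          ⟨p1,q2,a1,a2,hq2,(⟨hf1,rfl,hE⟩|⟨hf1,rfl,hE⟩)⟩|
          ⟨p1,q2,a1,a2,hq2,(⟨hf1,rfl,hE⟩|⟨hf1,rfl,hE⟩)⟩|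
          ⟨c,t1,hc,a3,a4,(⟨hf1,rfl,hE⟩|⟨hf1,rfl,hE⟩)⟩|
          ⟨c,t1,hc,a3,a4,(⟨hf1,rfl,hE⟩|⟨hf1,rfl,hE⟩)⟩ <;>
        first
        | (simp [injs, inj1, inj2, injc] at hE; done)
        | (simp only [injs, Sum.inr.injEq] at hE
           subst hE
           first
           | exact Or.inr (Or.inr (Or.inr (Or.inr (Or.inl
               ⟨p1, (x, y, w), a1, a2, hq', Or.inl ⟨hf1, rfl⟩⟩))))
           | exact Or.inr (Or.inr (Or.inr (Or.inr (Or.inr (Or.inl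
               ⟨p1, (x, y, w), a1, a2, hq', Or.inl ⟨hf1, rfl⟩⟩)))))
           )
      · rcases hf with ⟨p1,t1,a1,a2,a3,a4,(⟨hf1,hE,rfl⟩|⟨hf1,hE,rfl⟩)⟩|
          ⟨p1,t1,a1,a2,a3,a4,(⟨hf1,hE,rfl⟩|⟨hf1,hE,rfl⟩)⟩|
          ⟨p1,q2,a1,a2,hq2,(⟨hf1,hE,rfl⟩|⟨hf1,hE,rfl⟩)⟩|
          ⟨p1,q2,a1,a2,hq2,(⟨hf1,hE,rfl⟩|⟨hf1,hE,rfl⟩)⟩|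
          ⟨c,t1,hc,a3,a4,(⟨hf1,hE,rfl⟩|⟨hf1,hE,rfl⟩)⟩|
          ⟨c,t1,hc,a3,a4,(⟨hf1,hE,rfl⟩|⟨hf1,hE,rfl⟩)⟩ <;>
        first
        | (simp [injs, inj1, inj2, injc] at hE; done)
        | (simp only [injs, Sum.inr.injEq] at hE
           subst hE
           first
           | exact Or.inr (Or.inr (Or.inr (Or.inr (Or.inl
               ⟨p1, (x, y, w), a1, a2, hq', Or.inr ⟨hf1, rfl⟩⟩))))
           | exact Or.inr (Or.inr (Or.inr (Or.inr (Or.inr (Or.inl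
               ⟨p1, (x, y, w), a1, a2, hq', Or.inr ⟨hf1, rfl⟩⟩)))))
           )
    · obtain ⟨c, t, hc, hT, hl, harc⟩ := h
      rcases harc with ⟨hh, rfl⟩|⟨hh, rfl⟩
      · exact Or.inr (Or.inr (Or.inr (Or.inr (Or.inr (Or.inr (Or.inl
          ⟨c, t, hc, hT, hl, Or.inl ⟨hh, rfl⟩⟩))))))
      · exact Or.inr (Or.inr (Or.inr (Or.inr (Or.inr (Or.inr (Or.inl
          ⟨c, t, hc, hT, hl, Or.inr ⟨hh, rfl⟩⟩))))))
    · obtain ⟨c, t, hc, hT, hl, harc⟩ := h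
      rcases hT with ⟨t1, ⟨b1, b2⟩, rfl⟩|⟨t1, ⟨b1, b2⟩, rfl⟩|⟨q, hq, rfl⟩
      · rcases harc with ⟨hh, rfl⟩|⟨hh, rfl⟩
        · exact Or.inr (Or.inr (Or.inr (Or.inr (Or.inr (Or.inr (Or.inr (Or.inl
            ⟨c, t1, hc, b1, b2, Or.inl ⟨hh, rfl⟩⟩)))))))
        · exact Or.inr (Or.inr (Or.inr (Or.inr (Or.inr (Or.inr (Or.inr (Or.inl
            ⟨c, t1, hc, b1, b2, Or.inr ⟨hh, rfl⟩⟩)))))))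
      · rcases harc with ⟨hh, rfl⟩|⟨hh, rfl⟩
        · exact Or.inr (Or.inr (Or.inr (Or.inr (Or.inr (Or.inr (Or.inr (Or.inr
            ⟨c, t1, hc, b1, b2, Or.inl ⟨hh, rfl⟩⟩)))))))
        · exact Or.inr (Or.inr (Or.inr (Or.inr (Or.inr (Or.inr (Or.inr (Or.inr
            ⟨c, t1, hc, b1, b2, Or.inr ⟨hh, rfl⟩⟩)))))))
      · rcases harc with ⟨hh, -⟩|⟨hh, -⟩ <;> simp at hh
  · rintro (⟨p,t,hp,hk,ht,hl,(⟨hf,rfl⟩|⟨hf,rfl⟩)⟩|⟨p,t,hp,hk,ht,hl,(⟨hf,rfl⟩|⟨hf,rfl⟩)⟩|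
      ⟨p,t,hp,hk,ht,hl,(⟨hf,rfl⟩|⟨hf,rfl⟩)⟩|⟨p,⟨x,y,w⟩,hp,hk,hq,(⟨hf,rfl⟩|⟨hf,rfl⟩)⟩|
      ⟨p,⟨x,y,w⟩,hp,hk,hq,(⟨hf,rfl⟩|⟨hf,rfl⟩)⟩|⟨p,⟨x,y,w⟩,hp,hk,hq,(⟨hf,rfl⟩|⟨hf,rfl⟩)⟩|
      ⟨c,t,hc,ht,hl,(⟨hh,rfl⟩|⟨hh,rfl⟩)⟩|⟨c,t,hc,ht,hl,(⟨hh,rfl⟩|⟨hh,rfl⟩)⟩|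
      ⟨c,t,hc,ht,hl,(⟨hh,rfl⟩|⟨hh,rfl⟩)⟩)
    · exact Or.inl ⟨p, t, hp, hk, ht, hl, Or.inl ⟨hf, rfl⟩⟩
    · exact Or.inl ⟨p, t, hp, hk, ht, hl, Or.inr ⟨hf, rfl⟩⟩
    · exact Or.inr (Or.inl ⟨inj1 p, inj1 t, Or.inl ⟨p, ⟨hp, hk⟩, rfl⟩, rfl,
        Or.inl ⟨t, ⟨ht, hl⟩, rfl⟩, rfl,
        Or.inl ⟨Or.inl ⟨p, t, hp, hk, ht, hl, Or.inl ⟨hf, rfl, rfl⟩⟩, rfl⟩⟩)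
    · exact Or.inr (Or.inl ⟨inj1 p, inj1 t, Or.inl ⟨p, ⟨hp, hk⟩, rfl⟩, rfl,
        Or.inl ⟨t, ⟨ht, hl⟩, rfl⟩, rfl,
        Or.inr ⟨Or.inl ⟨p, t, hp, hk, ht, hl, Or.inr ⟨hf, rfl, rfl⟩⟩, rfl⟩⟩)
    · exact Or.inr (Or.inl ⟨inj2 p, inj2 t, Or.inr (Or.inl ⟨p, ⟨hp, hk⟩, rfl⟩), rfl,
        Or.inr (Or.inl ⟨t, ⟨ht, hl⟩, rfl⟩), rfl,
        Or.inl ⟨Or.inr (Or.inl ⟨p, t, hp, hk, ht, hl, Or.inl ⟨hf, rfl, rfl⟩⟩), rfl⟩⟩)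
    · exact Or.inr (Or.inl ⟨inj2 p, inj2 t, Or.inr (Or.inl ⟨p, ⟨hp, hk⟩, rfl⟩), rfl,
        Or.inr (Or.inl ⟨t, ⟨ht, hl⟩, rfl⟩), rfl,
        Or.inr ⟨Or.inr (Or.inl ⟨p, t, hp, hk, ht, hl, Or.inr ⟨hf, rfl, rfl⟩⟩), rfl⟩⟩)
    · obtain ⟨q1, q2, q3, s, s1, s2, s3⟩ := hq
      exact Or.inr (Or.inr (Or.inl ⟨p, (x, injs (y, w)), hp, hk,
        (by rw [syncPairs_R]; exact ⟨(x, y, w), ⟨q1, q2, q3, s, s1, s2, s3⟩, rfl⟩),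
        Or.inl ⟨hf, rfl⟩⟩))
    · obtain ⟨q1, q2, q3, s, s1, s2, s3⟩ := hq
      exact Or.inr (Or.inr (Or.inl ⟨p, (x, injs (y, w)), hp, hk,
        (by rw [syncPairs_R]; exact ⟨(x, y, w), ⟨q1, q2, q3, s, s1, s2, s3⟩, rfl⟩),
        Or.inr ⟨hf, rfl⟩⟩))
    · obtain ⟨q1, q2, q3, s, s1, s2, s3⟩ := hq
      exact Or.inr (Or.inr (Or.inr (Or.inl ⟨inj1 p, (x, injs (y, w)),
        Or.inl ⟨p, ⟨hp, hk⟩, rfl⟩, rfl,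
        (by rw [syncPairs_R]; exact ⟨(x, y, w), ⟨q1, q2, q3, s, s1, s2, s3⟩, rfl⟩),
        Or.inl ⟨Or.inr (Or.inr (Or.inl ⟨p, (y, w), hp, hk, ⟨q2, q3, s, s2, s3⟩,
          Or.inl ⟨hf, rfl, rfl⟩⟩)), rfl⟩⟩)))
    · obtain ⟨q1, q2, q3, s, s1, s2, s3⟩ := hq
      exact Or.inr (Or.inr (Or.inr (Or.inl ⟨inj1 p, (x, injs (y, w)),
        Or.inl ⟨p, ⟨hp, hk⟩, rfl⟩, rfl,
        (by rw [syncPairs_R]; exact ⟨(x, y, w), ⟨q1, q2, q3, s, s1, s2, s3⟩, rfl⟩),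
        Or.inr ⟨Or.inr (Or.inr (Or.inl ⟨p, (y, w), hp, hk, ⟨q2, q3, s, s2, s3⟩,
          Or.inr ⟨hf, rfl, rfl⟩⟩)), rfl⟩⟩)))
    · obtain ⟨q1, q2, q3, s, s1, s2, s3⟩ := hq
      exact Or.inr (Or.inr (Or.inr (Or.inl ⟨inj2 p, (x, injs (y, w)),
        Or.inr (Or.inl ⟨p, ⟨hp, hk⟩, rfl⟩), rfl,
        (by rw [syncPairs_R]; exact ⟨(x, y, w), ⟨q1, q2, q3, s, s1, s2, s3⟩, rfl⟩),
        Or.inl ⟨Or.inr (Or.inr (Or.inr (Or.inl ⟨p, (y, w), hp, hk, ⟨q2, q3, s, s2, s3⟩,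
          Or.inl ⟨hf, rfl, rfl⟩⟩))), rfl⟩⟩)))
    · obtain ⟨q1, q2, q3, s, s1, s2, s3⟩ := hq
      exact Or.inr (Or.inr (Or.inr (Or.inl ⟨inj2 p, (x, injs (y, w)),
        Or.inr (Or.inl ⟨p, ⟨hp, hk⟩, rfl⟩), rfl,
        (by rw [syncPairs_R]; exact ⟨(x, y, w), ⟨q1, q2, q3, s, s1, s2, s3⟩, rfl⟩),
        Or.inr ⟨Or.inr (Or.inr (Or.inr (Or.inl ⟨p, (y, w), hp, hk, ⟨q2, q3, s, s2, s3⟩,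
          Or.inr ⟨hf, rfl, rfl⟩⟩))), rfl⟩⟩)))
    · exact Or.inr (Or.inr (Or.inr (Or.inr (Or.inl ⟨c, t, hc, ht, hl, Or.inl ⟨hh, rfl⟩⟩))))
    · exact Or.inr (Or.inr (Or.inr (Or.inr (Or.inl ⟨c, t, hc, ht, hl, Or.inr ⟨hh, rfl⟩⟩))))
    · exact Or.inr (Or.inr (Or.inr (Or.inr (Or.inr ⟨c, inj1 t, hc,
        Or.inl ⟨t, ⟨ht, hl⟩, rfl⟩, rfl, Or.inl ⟨hh, rfl⟩⟩))))
    · exact Or.inr (Or.inr (Or.inr (Or.inr (Or.inr ⟨c, inj1 t, hc,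
        Or.inl ⟨t, ⟨ht, hl⟩, rfl⟩, rfl, Or.inr ⟨hh, rfl⟩⟩))))
    · exact Or.inr (Or.inr (Or.inr (Or.inr (Or.inr ⟨c, inj2 t, hc,
        Or.inr (Or.inl ⟨t, ⟨ht, hl⟩, rfl⟩), rfl, Or.inl ⟨hh, rfl⟩⟩))))
    · exact Or.inr (Or.inr (Or.inr (Or.inr (Or.inr ⟨c, inj2 t, hc,
        Or.inr (Or.inl ⟨t, ⟨ht, hl⟩, rfl⟩), rfl, Or.inr ⟨hh, rfl⟩⟩))))


set_option maxHeartbeats 1000000 in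
lemma arcSpec_assocMap (N1 : LNet X C S) (N2 : LNet Y C S) (N3 : LNet Z C S)
    (u v : CNode (CNode X Y C) Z C) :
    (u, v) ∈ arcSpec N1 N2 N3
      (fun x => inj1 (inj1 x)) (fun y => inj1 (inj2 y)) inj2 injc
      (fun q => injs (injs (q.1, q.2.1), q.2.2)) ↔
    (assocMap u, assocMap v) ∈ arcSpec N1 N2 N3
      inj1 (fun y => inj2 (inj1 y)) (fun z => inj2 (inj2 z)) injc
      (fun q => injs (q.1, injs (q.2.1, q.2.2))) := by
  simp only [arcSpec, Set.mem_setOf_eq, Prod.mk.injEq]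
  constructor
  · rintro (⟨p,t,a1,a2,a3,a4,(⟨hf,rfl,rfl⟩|⟨hf,rfl,rfl⟩)⟩|
      ⟨p,t,a1,a2,a3,a4,(⟨hf,rfl,rfl⟩|⟨hf,rfl,rfl⟩)⟩|
      ⟨p,t,a1,a2,a3,a4,(⟨hf,rfl,rfl⟩|⟨hf,rfl,rfl⟩)⟩|
      ⟨p,⟨x,y,w⟩,a1,a2,hq,(⟨hf,rfl,rfl⟩|⟨hf,rfl,rfl⟩)⟩|
      ⟨p,⟨x,y,w⟩,a1,a2,hq,(⟨hf,rfl,rfl⟩|⟨hf,rfl,rfl⟩)⟩|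
      ⟨p,⟨x,y,w⟩,a1,a2,hq,(⟨hf,rfl,rfl⟩|⟨hf,rfl,rfl⟩)⟩|
      ⟨c,t,hc,a3,a4,(⟨hf,rfl,rfl⟩|⟨hf,rfl,rfl⟩)⟩|
      ⟨c,t,hc,a3,a4,(⟨hf,rfl,rfl⟩|⟨hf,rfl,rfl⟩)⟩|
      ⟨c,t,hc,a3,a4,(⟨hf,rfl,rfl⟩|⟨hf,rfl,rfl⟩)⟩) <;>
    first
    | exact Or.inl ⟨p, t, a1, a2, a3, a4, Or.inl ⟨hf, rfl, rfl⟩⟩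
    | exact Or.inl ⟨p, t, a1, a2, a3, a4, Or.inr ⟨hf, rfl, rfl⟩⟩
    | exact Or.inr (Or.inl ⟨p, t, a1, a2, a3, a4, Or.inl ⟨hf, rfl, rfl⟩⟩)
    | exact Or.inr (Or.inl ⟨p, t, a1, a2, a3, a4, Or.inr ⟨hf, rfl, rfl⟩⟩)
    | exact Or.inr (Or.inr (Or.inl ⟨p, t, a1, a2, a3, a4, Or.inl ⟨hf, rfl, rfl⟩⟩))
    | exact Or.inr (Or.inr (Or.inl ⟨p, t, a1, a2, a3, a4, Or.inr ⟨hf, rfl, rfl⟩⟩))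
    | exact Or.inr (Or.inr (Or.inr (Or.inl ⟨p, (x,y,w), a1, a2, hq, Or.inl ⟨hf, rfl, rfl⟩⟩)))
    | exact Or.inr (Or.inr (Or.inr (Or.inl ⟨p, (x,y,w), a1, a2, hq, Or.inr ⟨hf, rfl, rfl⟩⟩)))
    | exact Or.inr (Or.inr (Or.inr (Or.inr (Or.inl ⟨p, (x,y,w), a1, a2, hq, Or.inl ⟨hf, rfl, rfl⟩⟩))))
    | exact Or.inr (Or.inr (Or.inr (Or.inr (Or.inl ⟨p, (x,y,w), a1, a2, hq, Or.inr ⟨hf, rfl, rfl⟩⟩))))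
    | exact Or.inr (Or.inr (Or.inr (Or.inr (Or.inr (Or.inl ⟨p, (x,y,w), a1, a2, hq, Or.inl ⟨hf, rfl, rfl⟩⟩)))))
    | exact Or.inr (Or.inr (Or.inr (Or.inr (Or.inr (Or.inl ⟨p, (x,y,w), a1, a2, hq, Or.inr ⟨hf, rfl, rfl⟩⟩)))))
    | exact Or.inr (Or.inr (Or.inr (Or.inr (Or.inr (Or.inr (Or.inl ⟨c, t, hc, a3, a4, Or.inl ⟨hf, rfl, rfl⟩⟩))))))
    | exact Or.inr (Or.inr (Or.inr (Or.inr (Or.inr (Or.inr (Or.inl ⟨c, t, hc, a3, a4, Or.inr ⟨hf, rfl, rfl⟩⟩))))))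
    | exact Or.inr (Or.inr (Or.inr (Or.inr (Or.inr (Or.inr (Or.inr (Or.inl ⟨c, t, hc, a3, a4, Or.inl ⟨hf, rfl, rfl⟩⟩)))))))
    | exact Or.inr (Or.inr (Or.inr (Or.inr (Or.inr (Or.inr (Or.inr (Or.inl ⟨c, t, hc, a3, a4, Or.inr ⟨hf, rfl, rfl⟩⟩)))))))
    | exact Or.inr (Or.inr (Or.inr (Or.inr (Or.inr (Or.inr (Or.inr (Or.inr ⟨c, t, hc, a3, a4, Or.inl ⟨hf, rfl, rfl⟩⟩)))))))
    | exact Or.inr (Or.inr (Or.inr (Or.inr (Or.inr (Or.inr (Or.inr (Or.inr ⟨c, t, hc, a3, a4, Or.inr ⟨hf, rfl, rfl⟩⟩)))))))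
  · rintro (⟨p,t,a1,a2,a3,a4,(⟨hf,hE1,hE2⟩|⟨hf,hE1,hE2⟩)⟩|
      ⟨p,t,a1,a2,a3,a4,(⟨hf,hE1,hE2⟩|⟨hf,hE1,hE2⟩)⟩|
      ⟨p,t,a1,a2,a3,a4,(⟨hf,hE1,hE2⟩|⟨hf,hE1,hE2⟩)⟩|
      ⟨p,⟨x,y,w⟩,a1,a2,hq,(⟨hf,hE1,hE2⟩|⟨hf,hE1,hE2⟩)⟩|
      ⟨p,⟨x,y,w⟩,a1,a2,hq,(⟨hf,hE1,hE2⟩|⟨hf,hE1,hE2⟩)⟩|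
      ⟨p,⟨x,y,w⟩,a1,a2,hq,(⟨hf,hE1,hE2⟩|⟨hf,hE1,hE2⟩)⟩|
      ⟨c,t,hc,a3,a4,(⟨hf,hE1,hE2⟩|⟨hf,hE1,hE2⟩)⟩|
      ⟨c,t,hc,a3,a4,(⟨hf,hE1,hE2⟩|⟨hf,hE1,hE2⟩)⟩|
      ⟨c,t,hc,a3,a4,(⟨hf,hE1,hE2⟩|⟨hf,hE1,hE2⟩)⟩) <;>
    first
    | (obtain rfl := assocMap_eq_inj1 hE1; obtain rfl := assocMap_eq_inj1 hE2;
       first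
       | exact Or.inl ⟨p, t, a1, a2, a3, a4, Or.inl ⟨hf, rfl, rfl⟩⟩
       | exact Or.inl ⟨p, t, a1, a2, a3, a4, Or.inr ⟨hf, rfl, rfl⟩⟩)
    | (obtain rfl := assocMap_eq_inj21 hE1; obtain rfl := assocMap_eq_inj21 hE2;
       first
       | exact Or.inr (Or.inl ⟨p, t, a1, a2, a3, a4, Or.inl ⟨hf, rfl, rfl⟩⟩)
       | exact Or.inr (Or.inl ⟨p, t, a1, a2, a3, a4, Or.inr ⟨hf, rfl, rfl⟩⟩))
    | (obtain rfl := assocMap_eq_inj22 hE1; obtain rfl := assocMap_eq_inj22 hE2;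
       first
       | exact Or.inr (Or.inr (Or.inl ⟨p, t, a1, a2, a3, a4, Or.inl ⟨hf, rfl, rfl⟩⟩))
       | exact Or.inr (Or.inr (Or.inl ⟨p, t, a1, a2, a3, a4, Or.inr ⟨hf, rfl, rfl⟩⟩)))
    | (obtain rfl := assocMap_eq_inj1 hE1; obtain rfl := assocMap_eq_injss hE2;
       exact Or.inr (Or.inr (Or.inr (Or.inl ⟨p, (x,y,w), a1, a2, hq, Or.inl ⟨hf, rfl, rfl⟩⟩))))
    | (obtain rfl := assocMap_eq_injss hE1; obtain rfl := assocMap_eq_inj1 hE2;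
       exact Or.inr (Or.inr (Or.inr (Or.inl ⟨p, (x,y,w), a1, a2, hq, Or.inr ⟨hf, rfl, rfl⟩⟩))))
    | (obtain rfl := assocMap_eq_inj21 hE1; obtain rfl := assocMap_eq_injss hE2;
       exact Or.inr (Or.inr (Or.inr (Or.inr (Or.inl ⟨p, (x,y,w), a1, a2, hq, Or.inl ⟨hf, rfl, rfl⟩⟩)))))
    | (obtain rfl := assocMap_eq_injss hE1; obtain rfl := assocMap_eq_inj21 hE2;
       exact Or.inr (Or.inr (Or.inr (Or.inr (Or.inl ⟨p, (x,y,w), a1, a2, hq, Or.inr ⟨hf, rfl, rfl⟩⟩)))))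
    | (obtain rfl := assocMap_eq_inj22 hE1; obtain rfl := assocMap_eq_injss hE2;
       exact Or.inr (Or.inr (Or.inr (Or.inr (Or.inr (Or.inl ⟨p, (x,y,w), a1, a2, hq, Or.inl ⟨hf, rfl, rfl⟩⟩))))))
    | (obtain rfl := assocMap_eq_injss hE1; obtain rfl := assocMap_eq_inj22 hE2;
       exact Or.inr (Or.inr (Or.inr (Or.inr (Or.inr (Or.inl ⟨p, (x,y,w), a1, a2, hq, Or.inr ⟨hf, rfl, rfl⟩⟩))))))
    | (obtain rfl := assocMap_eq_inj1 hE1; obtain rfl := assocMap_eq_injc hE2;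
       exact Or.inr (Or.inr (Or.inr (Or.inr (Or.inr (Or.inr (Or.inl ⟨c, t, hc, a3, a4, Or.inl ⟨hf, rfl, rfl⟩⟩)))))))
    | (obtain rfl := assocMap_eq_injc hE1; obtain rfl := assocMap_eq_inj1 hE2;
       exact Or.inr (Or.inr (Or.inr (Or.inr (Or.inr (Or.inr (Or.inl ⟨c, t, hc, a3, a4, Or.inr ⟨hf, rfl, rfl⟩⟩)))))))
    | (obtain rfl := assocMap_eq_inj21 hE1; obtain rfl := assocMap_eq_injc hE2;
       exact Or.inr (Or.inr (Or.inr (Or.inr (Or.inr (Or.inr (Or.inr (Or.inl ⟨c, t, hc, a3, a4, Or.inl ⟨hf, rfl, rfl⟩⟩))))))))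
    | (obtain rfl := assocMap_eq_injc hE1; obtain rfl := assocMap_eq_inj21 hE2;
       exact Or.inr (Or.inr (Or.inr (Or.inr (Or.inr (Or.inr (Or.inr (Or.inl ⟨c, t, hc, a3, a4, Or.inr ⟨hf, rfl, rfl⟩⟩))))))))
    | (obtain rfl := assocMap_eq_inj22 hE1; obtain rfl := assocMap_eq_injc hE2;
       exact Or.inr (Or.inr (Or.inr (Or.inr (Or.inr (Or.inr (Or.inr (Or.inr ⟨c, t, hc, a3, a4, Or.inl ⟨hf, rfl, rfl⟩⟩))))))))
    | (obtain rfl := assocMap_eq_injc hE1; obtain rfl := assocMap_eq_inj22 hE2;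
       exact Or.inr (Or.inr (Or.inr (Or.inr (Or.inr (Or.inr (Or.inr (Or.inr ⟨c, t, hc, a3, a4, Or.inr ⟨hf, rfl, rfl⟩⟩))))))))


lemma T_map (N1 : LNet X C S) (N2 : LNet Y C S) (N3 : LNet Z C S) :
    assocMap '' (AScomp (AScomp N1 N2) N3).T = (AScomp N1 (AScomp N2 N3)).T := by
  ext w
  constructor
  · rintro ⟨u, hu, rfl⟩
    rcases mem_comp_T.1 hu with ⟨m, ⟨hmT, hml⟩, rfl⟩ | ⟨t, ht, rfl⟩ | ⟨q, hq, rfl⟩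
    · rcases mem_comp_T.1 hmT with ⟨t, ht, rfl⟩ | ⟨t, ht, rfl⟩ | ⟨q, hq, rfl⟩
      · exact mem_comp_T.2 (Or.inl ⟨t, ht, rfl⟩)
      · exact mem_comp_T.2 (Or.inr (Or.inl ⟨inj1 t,
          ⟨mem_comp_T.2 (Or.inl ⟨t, ht, rfl⟩), rfl⟩, rfl⟩))
      · obtain ⟨-, -, s, hs, -⟩ := hq
        rw [comp_l_injs, hs] at hml; cases hml
    · exact mem_comp_T.2 (Or.inr (Or.inl ⟨inj2 t,
        ⟨mem_comp_T.2 (Or.inr (Or.inl ⟨t, ht, rfl⟩)), rfl⟩, rfl⟩))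
    · rw [syncPairs_L] at hq
      obtain ⟨⟨x, y, w⟩, hq', rfl⟩ := hq
      obtain ⟨q1, q2, q3, s, s1, s2, s3⟩ := hq'
      exact mem_comp_T.2 (Or.inr (Or.inr ⟨(x, injs (y, w)),
        (by rw [syncPairs_R]; exact ⟨(x, y, w), ⟨q1, q2, q3, s, s1, s2, s3⟩, rfl⟩), rfl⟩))
  · intro hw
    rcases mem_comp_T.1 hw with ⟨t, ht, rfl⟩ | ⟨m, ⟨hmT, hml⟩, rfl⟩ | ⟨q, hq, rfl⟩
    · exact ⟨inj1 (inj1 t), mem_comp_T.2 (Or.inl ⟨inj1 t,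
        ⟨mem_comp_T.2 (Or.inl ⟨t, ht, rfl⟩), rfl⟩, rfl⟩), rfl⟩
    · rcases mem_comp_T.1 hmT with ⟨t, ht, rfl⟩ | ⟨t, ht, rfl⟩ | ⟨q, hq, rfl⟩
      · exact ⟨inj1 (inj2 t), mem_comp_T.2 (Or.inl ⟨inj2 t,
          ⟨mem_comp_T.2 (Or.inr (Or.inl ⟨t, ht, rfl⟩)), rfl⟩, rfl⟩), rfl⟩
      · exact ⟨inj2 t, mem_comp_T.2 (Or.inr (Or.inl ⟨t, ht, rfl⟩)), rfl⟩
      · obtain ⟨-, -, s, hs, -⟩ := hq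
        rw [comp_l_injs, hs] at hml; cases hml
    · rw [syncPairs_R] at hq
      obtain ⟨⟨x, y, w⟩, hq', rfl⟩ := hq
      obtain ⟨q1, q2, q3, s, s1, s2, s3⟩ := hq'
      exact ⟨injs (injs (x, y), w), mem_comp_T.2 (Or.inr (Or.inr ⟨(injs (x, y), w),
        (by rw [syncPairs_L]; exact ⟨(x, y, w), ⟨q1, q2, q3, s, s1, s2, s3⟩, rfl⟩), rfl⟩)), rfl⟩

lemma P_map (N1 : LNet X C S) (N2 : LNet Y C S) (N3 : LNet Z C S)
    (d1 : ∀ t, N1.h t = none ∨ N1.l t = none)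
    (d2 : ∀ t, N2.h t = none ∨ N2.l t = none)
    (d3 : ∀ t, N3.h t = none ∨ N3.l t = none) :
    assocMap '' (AScomp (AScomp N1 N2) N3).P = (AScomp N1 (AScomp N2 N3)).P := by
  ext w
  constructor
  · rintro ⟨u, hu, rfl⟩
    rcases mem_comp_P.1 hu with ⟨m, ⟨hmP, hmk⟩, rfl⟩ | ⟨p, hp, rfl⟩ | ⟨c, hc, rfl⟩
    · rcases mem_comp_P.1 hmP with ⟨p, hp, rfl⟩ | ⟨p, hp, rfl⟩ | ⟨c, hc, rfl⟩
      · exact mem_comp_P.2 (Or.inl ⟨p, hp, rfl⟩)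
      · exact mem_comp_P.2 (Or.inr (Or.inl ⟨inj1 p,
          ⟨mem_comp_P.2 (Or.inl ⟨p, hp, rfl⟩), rfl⟩, rfl⟩))
      · rw [comp_k_injc] at hmk; simp [hc] at hmk
    · exact mem_comp_P.2 (Or.inr (Or.inl ⟨inj2 p,
        ⟨mem_comp_P.2 (Or.inr (Or.inl ⟨p, hp, rfl⟩)), rfl⟩, rfl⟩))
    · rw [chanSet_L N1 N2 N3 d1 d2] at hc
      exact mem_comp_P.2 (Or.inr (Or.inr ⟨c,
        (by rw [chanSet_R N1 N2 N3 d2 d3]; exact hc), rfl⟩))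
  · intro hw
    rcases mem_comp_P.1 hw with ⟨p, hp, rfl⟩ | ⟨m, ⟨hmP, hmk⟩, rfl⟩ | ⟨c, hc, rfl⟩
    · exact ⟨inj1 (inj1 p), mem_comp_P.2 (Or.inl ⟨inj1 p,
        ⟨mem_comp_P.2 (Or.inl ⟨p, hp, rfl⟩), rfl⟩, rfl⟩), rfl⟩
    · rcases mem_comp_P.1 hmP with ⟨p, hp, rfl⟩ | ⟨p, hp, rfl⟩ | ⟨c, hc, rfl⟩
      · exact ⟨inj1 (inj2 p), mem_comp_P.2 (Or.inl ⟨inj2 p,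
          ⟨mem_comp_P.2 (Or.inr (Or.inl ⟨p, hp, rfl⟩)), rfl⟩, rfl⟩), rfl⟩
      · exact ⟨inj2 p, mem_comp_P.2 (Or.inr (Or.inl ⟨p, hp, rfl⟩)), rfl⟩
      · rw [comp_k_injc] at hmk; simp [hc] at hmk
    · rw [chanSet_R N1 N2 N3 d2 d3] at hc
      exact ⟨injc c, mem_comp_P.2 (Or.inr (Or.inr ⟨c,
        (by rw [chanSet_L N1 N2 N3 d1 d2]; exact hc), rfl⟩)), rfl⟩

lemma m0_map (N1 : LNet X C S) (N2 : LNet Y C S) (N3 : LNet Z C S) :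
    assocMap '' (AScomp (AScomp N1 N2) N3).m0 = (AScomp N1 (AScomp N2 N3)).m0 := by
  show assocMap '' (inj1 '' (inj1 '' N1.m0 ∪ inj2 '' N2.m0) ∪ inj2 '' N3.m0) =
    inj1 '' N1.m0 ∪ inj2 '' (inj1 '' N2.m0 ∪ inj2 '' N3.m0)
  simp only [Set.image_union, Set.image_image, assocMap_11, assocMap_12, assocMap_2]
  rw [Set.union_assoc]

lemma mf_map (N1 : LNet X C S) (N2 : LNet Y C S) (N3 : LNet Z C S) :
    assocMap '' (AScomp (AScomp N1 N2) N3).mf = (AScomp N1 (AScomp N2 N3)).mf := by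
  show assocMap '' (inj1 '' (inj1 '' N1.mf ∪ inj2 '' N2.mf) ∪ inj2 '' N3.mf) =
    inj1 '' N1.mf ∪ inj2 '' (inj1 '' N2.mf ∪ inj2 '' N3.mf)
  simp only [Set.image_union, Set.image_image, assocMap_11, assocMap_12, assocMap_2]
  rw [Set.union_assoc]

lemma nodesL_shape {N1 : LNet X C S} {N2 : LNet Y C S} {N3 : LNet Z C S}
    {u : CNode (CNode X Y C) Z C}
    (hu : u ∈ nodes (AScomp (AScomp N1 N2) N3).toNet) :
    (∃ x, u = inj1 (inj1 x)) ∨ (∃ y, u = inj1 (inj2 y)) ∨ (∃ z, u = inj2 z) ∨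
    (∃ c, u = injc c) ∨ (∃ x y w, u = injs (injs (x, y), w)) := by
  rcases hu with hu | hu
  · rcases mem_comp_P.1 hu with ⟨m, ⟨hmP, hmk⟩, rfl⟩ | ⟨p, hp, rfl⟩ | ⟨c, hc, rfl⟩
    · rcases mem_comp_P.1 hmP with ⟨p, hp, rfl⟩ | ⟨p, hp, rfl⟩ | ⟨c, hc, rfl⟩
      · exact Or.inl ⟨p, rfl⟩
      · exact Or.inr (Or.inl ⟨p, rfl⟩)
      · rw [comp_k_injc] at hmk; simp [hc] at hmk
    · exact Or.inr (Or.inr (Or.inl ⟨p, rfl⟩))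
    · exact Or.inr (Or.inr (Or.inr (Or.inl ⟨c, rfl⟩)))
  · rcases mem_comp_T.1 hu with ⟨m, ⟨hmT, hml⟩, rfl⟩ | ⟨t, ht, rfl⟩ | ⟨q, hq, rfl⟩
    · rcases mem_comp_T.1 hmT with ⟨t, ht, rfl⟩ | ⟨t, ht, rfl⟩ | ⟨q, hq, rfl⟩
      · exact Or.inl ⟨t, rfl⟩
      · exact Or.inr (Or.inl ⟨t, rfl⟩)
      · obtain ⟨-, -, s, hs, -⟩ := hq
        rw [comp_l_injs, hs] at hml; cases hml
    · exact Or.inr (Or.inr (Or.inl ⟨t, rfl⟩))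
    · rw [syncPairs_L] at hq
      obtain ⟨⟨x, y, w⟩, -, rfl⟩ := hq
      exact Or.inr (Or.inr (Or.inr (Or.inr ⟨x, y, w, rfl⟩)))

lemma assocMap_injOn (N1 : LNet X C S) (N2 : LNet Y C S) (N3 : LNet Z C S) :
    Set.InjOn assocMap (nodes (AScomp (AScomp N1 N2) N3).toNet) := by
  intro a ha b hb h
  rcases nodesL_shape ha with ⟨x, rfl⟩|⟨y, rfl⟩|⟨z, rfl⟩|⟨c, rfl⟩|⟨x, y, w, rfl⟩ <;>
    rcases nodesL_shape hb with ⟨x', rfl⟩|⟨y', rfl⟩|⟨z', rfl⟩|⟨c', rfl⟩|⟨x', y', w', rfl⟩ <;>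
    simp_all [assocMap, inj1, inj2, injc, injs]

end ASassoc








/-- AS-composition is associative up to isomorphism of labeled marked
nets. -/
theorem AScomp_assoc
    {X Y Z C S : Type} (N1 : LNet X C S) (N2 : LNet Y C S) (N3 : LNet Z C S)
    (h1 : IsLGWF N1) (h2 : IsLGWF N2) (h3 : IsLGWF N3) :
    LIso (AScomp (AScomp N1 N2) N3) (AScomp N1 (AScomp N2 N3)) := by
  have d1 := h1.hl_disj
  have d2 := h2.hl_disj
  have d3 := h3.hl_disj
  have hP := P_map N1 N2 N3 d1 d2 d3
  have hT := T_map N1 N2 N3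
  have hN : assocMap '' nodes (AScomp (AScomp N1 N2) N3).toNet
      = nodes (AScomp N1 (AScomp N2 N3)).toNet := by
    show assocMap '' ((AScomp (AScomp N1 N2) N3).P ∪ (AScomp (AScomp N1 N2) N3).T) = _
    rw [Set.image_union, hP, hT]; rfl
  refine ⟨assocMap,
    ⟨fun x hx => hN ▸ Set.mem_image_of_mem assocMap hx, assocMap_injOn N1 N2 N3, hN.ge⟩,
    hP, hT,
    fun x _ y _ => by
      rw [memF_L N1 N2 N3 d1 d2, memF_R N1 N2 N3 d2 d3]
      exact arcSpec_assocMap N1 N2 N3 x y,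
    m0_map N1 N2 N3, mf_map N1 N2 N3, fun x hx => ?_⟩
  rcases nodesL_shape hx with ⟨x, rfl⟩|⟨y, rfl⟩|⟨z, rfl⟩|⟨c, rfl⟩|⟨x, y, w, rfl⟩
  · exact ⟨rfl, rfl, rfl⟩
  · exact ⟨rfl, rfl, rfl⟩
  · exact ⟨rfl, rfl, rfl⟩
  · refine ⟨rfl, rfl, ?_⟩
    show (AScomp N1 (AScomp N2 N3)).k (injc c) = (AScomp (AScomp N1 N2) N3).k (injc c)
    rw [comp_k_injc, comp_k_injc, chanSet_L N1 N2 N3 d1 d2, chanSet_R N1 N2 N3 d2 d3]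
  · exact ⟨rfl, rfl, rfl⟩

end PNets
end

section
/- Every state machine decomposable generalized workflow net is safe: if N is a GWF-net in which every place belongs to at least one sequential component, then every marking reachable from the initial marking of N puts at most one token on each place. -/
open Classical

namespace PNets

/-- Invariant: the seq. component `A` carries exactly one token. -/
def SInv (A : Set X) (m : X → ℕ) : Prop :=
  ∃ p ∈ A, m p = 1 ∧ ∀ q ∈ A, q ≠ p → m q = 0

/-- Global invariant. -/
def GoodM (N : Net X) (m : X → ℕ) : Prop :=
  (∀ p, p ∉ N.P → m p = 0) ∧ ∀ A, IsSeqComponent N A → SInv A m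

lemma pre_subset_P {N : Net X} (hN : IsNet N) {t : X} (ht : t ∈ N.T) :
    pre N t ⊆ N.P := by
  intro y hy
  rcases hN.flow_sub hy with h | h
  · exact h.1
  · exact absurd ht (Set.disjoint_left.mp hN.disj h.2)

lemma post_subset_P {N : Net X} (hN : IsNet N) {t : X} (ht : t ∈ N.T) :
    post N t ⊆ N.P := by
  intro y hy
  rcases hN.flow_sub hy with h | h
  · exact absurd ht (Set.disjoint_left.mp hN.disj h.1)
  · exact h.2

lemma nbh_subset_T {N : Net X} (hN : IsNet N) {A : Set X} (hA : A ⊆ N.P) :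
    nbh N A ⊆ N.T := by
  rintro x ⟨a, haA, hf | hf⟩
  · rcases hN.flow_sub hf with h | h
    · exact absurd (hA haA) (Set.disjoint_right.mp hN.disj h.2)
    · exact h.1
  · rcases hN.flow_sub hf with h | h
    · exact h.2
    · exact absurd (hA haA) (Set.disjoint_right.mp hN.disj h.1)

lemma seq_pre_post {N : Net X} (hN : IsNet N) {A : Set X}
    (hA : IsSeqComponent N A) {t : X} (ht : t ∈ N.T) (htn : t ∈ nbh N A) :
    (∃! p, p ∈ pre N t ∩ A) ∧ (∃! p, p ∈ post N t ∩ A) := by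
  obtain ⟨hAP, ⟨_, hsm⟩, _⟩ := hA
  have htT' : t ∈ (subnet N (A ∪ nbh N A)).T := ⟨ht, Or.inr htn⟩
  have hnbhT := nbh_subset_T hN hAP
  have hpre : pre (subnet N (A ∪ nbh N A)) t = pre N t ∩ A := by
    ext y
    constructor
    · rintro ⟨hf, hy, -⟩
      refine ⟨hf, ?_⟩
      rcases hy with hy | hy
      · exact hy
      · exact absurd (pre_subset_P hN ht hf)
          (Set.disjoint_right.mp hN.disj (hnbhT hy))
    · rintro ⟨hf, hy⟩
      exact ⟨hf, Or.inl hy, Or.inr htn⟩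
  have hpost : post (subnet N (A ∪ nbh N A)) t = post N t ∩ A := by
    ext y
    constructor
    · rintro ⟨hf, -, hy⟩
      refine ⟨hf, ?_⟩
      rcases hy with hy | hy
      · exact hy
      · exact absurd (post_subset_P hN ht hf)
          (Set.disjoint_right.mp hN.disj (hnbhT hy))
    · rintro ⟨hf, hy⟩
      exact ⟨hf, Or.inr htn, Or.inl hy⟩
  obtain ⟨h1, h2⟩ := hsm t htT'
  exact ⟨hpre ▸ h1, hpost ▸ h2⟩

lemma good_init {N : Net X} (hgwf : IsGWF N) : GoodM N (initM N) := by
  constructor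
  · intro p hp
    have : p ∉ N.m0 := fun h => hp (hgwf.m0_sub h)
    simp [initM, Set.indicator_of_notMem this]
  · intro A hA
    obtain ⟨p0, hp0, hu⟩ := hA.2.2
    refine ⟨p0, hp0.2, ?_, ?_⟩
    · simp [initM, Set.indicator_of_mem hp0.1]
    · intro q hq hne
      have : q ∉ N.m0 := fun h => hne (hu q ⟨h, hq⟩)
      simp [initM, Set.indicator_of_notMem this]

lemma good_step {N : Net X} (hN : IsNet N) {m m' : X → ℕ}
    (hg : GoodM N m) (hs : stepM N m m') : GoodM N m' := by
  obtain ⟨t, ht, hen, hup⟩ := hs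
  constructor
  · intro p hp
    have h1 : p ∉ pre N t := fun h => hp (pre_subset_P hN ht h)
    have h2 : p ∉ post N t := fun h => hp (post_subset_P hN ht h)
    rw [hup p, Set.indicator_of_notMem h1, Set.indicator_of_notMem h2,
      hg.1 p hp]
    rfl
  · intro A hA
    obtain ⟨p, hpA, hp1, hrest⟩ := hg.2 A hA
    by_cases htn : t ∈ nbh N A
    · obtain ⟨⟨pin, hpin, huin⟩, ⟨pout, hpout, huout⟩⟩ := seq_pre_post hN hA ht htn
      -- pin = p
      have hpinp : pin = p := by
        by_contra hne
        have := hrest pin hpin.2 hne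
        have h1 := hen pin hpin.1
        omega
      have hio : pout ≠ pin := by
        intro h
        exact hN.no_selfloop pin t hpin.1 (h ▸ hpout.1)
      refine ⟨pout, hpout.2, ?_, ?_⟩
      · have h1 : pout ∉ pre N t := fun h => hio (huin pout ⟨h, hpout.2⟩)
        have h2 : m pout = 0 := hrest pout hpout.2 (hpinp ▸ hio)
        rw [hup pout, Set.indicator_of_notMem h1, Set.indicator_of_mem hpout.1, h2]
        rfl
      · intro q hq hne
        have hq1 : q ∉ post N t := fun h => hne (huout q ⟨h, hq⟩)
        rw [hup q, Set.indicator_of_notMem hq1]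
        by_cases hqp : q = p
        · subst hqp
          have : q ∈ pre N t := hpinp ▸ hpin.1
          rw [Set.indicator_of_mem this, hp1]
          rfl
        · have hq2 : q ∉ pre N t := by
            intro h
            exact hqp ((huin q ⟨h, hq⟩).trans hpinp)
          rw [Set.indicator_of_notMem hq2, hrest q hq hqp]
          rfl
    · -- t does not touch A
      have hdisj1 : ∀ q ∈ A, q ∉ pre N t := by
        intro q hq h
        exact htn ⟨q, hq, Or.inr h⟩
      have hdisj2 : ∀ q ∈ A, q ∉ post N t := by
        intro q hq h
        exact htn ⟨q, hq, Or.inl h⟩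
      refine ⟨p, hpA, ?_, ?_⟩
      · rw [hup p, Set.indicator_of_notMem (hdisj1 p hpA),
          Set.indicator_of_notMem (hdisj2 p hpA), hp1]
        rfl
      · intro q hq hne
        rw [hup q, Set.indicator_of_notMem (hdisj1 q hq),
          Set.indicator_of_notMem (hdisj2 q hq), hrest q hq hne]
        rfl

/-- every state machine decomposable GWF-net is safe. -/
theorem smd_gwf_safe {X : Type} (N : Net X) (hgwf : IsGWF N) (hsmd : SMD N) :
    Safe N := by
  intro m hm p
  have hgood : GoodM N m := by
    induction hm with
    | refl => exact good_init hgwf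
    | tail _ hstep ih => exact good_step hgwf.isNet ih hstep
  by_cases hp : p ∈ N.P
  · obtain ⟨A, hA, hpA⟩ := hsmd p hp
    obtain ⟨p0, _, hp01, hrest⟩ := hgood.2 A hA
    by_cases h : p = p0
    · rw [h, hp01]
    · rw [hrest p hpA h]; omega
  · rw [hgood.1 p hp]; omega

end PNets
end
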